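/- arXiv:0909.3826 — 8 statements merged into one kernel-verified Lean document; each statement's English description precedes it below -/
import Mathlib

section
/- For every integer k ≥ 3: c₁((0,w),(0,w)) = 0 for every w ∈ ℝ, and there exists a constant K > 0 such that c₁((0,w),(0,z)) ≥ K for every w ∈ ℝ and every z < w. -/
/-! Write `E₁, E₂` for the energies `∫ u₁²`, `∫ u₂²` and `M` for the maximum of `x₁²` on `[0, 1]`.
Since `x₁ 0 = 0`, Cauchy–Schwarz makes `x₁` Hölder: `(x₁ t - x₁ s)² ≤ |t - s| E₁`. Hence `M ≤ E₁`,
and `x₁² ≥ M / 4` on an interval of length `M / (4 E₁)`, so `A := ∫ x₁² ≥ M² / (16 E₁)`.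
For `x₂` to go down, the term `u₂ x₁^k` has to beat `x₁²`; completing the square
`x₁² + u₂ x₁^k ≥ (x₁² - u₂² x₁^(2k-2)) / 2` shows this forces `A < M^(k-1) E₂`, which is at most
`M² E₂` when the cost is small (so `M ≤ 1`) and `k ≥ 3`. Hence `1 < 16 E₁ E₂ ≤ 4 (E₁ + E₂)²`, and
the cost `(E₁ + E₂) / 2` exceeds `1 / 4`. -/

open MeasureTheory intervalIntegral

noncomputable section

/-- The set of achievable costs for the planar control system
`ẋ₁ = u₁`, `ẋ₂ = x₁² + u₂ x₁^k` with Lagrangian `½(u₁² + u₂²)`, over essentially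
bounded measurable controls and absolutely continuous trajectories (encoded by the
integral formulation of the ODE) joining `a` to `b` in time `T`. -/
def planarCostSet (k : ℕ) (T : ℝ) (a b : ℝ × ℝ) : Set ℝ :=
  {r : ℝ | ∃ u₁ u₂ x₁ x₂ : ℝ → ℝ,
    Measurable u₁ ∧ Measurable u₂ ∧
    (∃ C : ℝ, ∀ᵐ t ∂(volume : Measure ℝ), t ∈ Set.Icc 0 T → |u₁ t| ≤ C ∧ |u₂ t| ≤ C) ∧
    ContinuousOn x₁ (Set.Icc 0 T) ∧ ContinuousOn x₂ (Set.Icc 0 T) ∧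
    x₁ 0 = a.1 ∧ x₂ 0 = a.2 ∧ x₁ T = b.1 ∧ x₂ T = b.2 ∧
    (∀ t ∈ Set.Icc (0:ℝ) T, x₁ t = x₁ 0 + ∫ s in (0:ℝ)..t, u₁ s) ∧
    (∀ t ∈ Set.Icc (0:ℝ) T, x₂ t = x₂ 0 + ∫ s in (0:ℝ)..t, (x₁ s ^ 2 + u₂ s * x₁ s ^ k)) ∧
    r = (1 / 2) * ∫ t in (0:ℝ)..T, (u₁ t ^ 2 + u₂ t ^ 2)}

/-- The optimal control cost `c_T(a,b)` for the planar system of Section 2. -/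
def planarCost (k : ℕ) (T : ℝ) (a b : ℝ × ℝ) : ℝ :=
  sInf (planarCostSet k T a b)

open Set

theorem intervalIntegrable_of_ae_abs_le {f : ℝ → ℝ} {a b C : ℝ} (hab : a ≤ b)
    (hf : Measurable f) (hC : ∀ᵐ t ∂volume, t ∈ Icc a b → |f t| ≤ C) :
    IntervalIntegrable f volume a b := by
  rw [intervalIntegrable_iff_integrableOn_Icc_of_le hab]
  refine Measure.integrableOn_of_bounded (M := C) measure_Icc_lt_top.ne hf.aestronglyMeasurable ?_
  rwa [ae_restrict_iff' measurableSet_Icc]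

theorem intervalIntegrable_sq_of_ae_abs_le {f : ℝ → ℝ} {a b C : ℝ} (hab : a ≤ b)
    (hf : Measurable f) (hC : ∀ᵐ t ∂volume, t ∈ Icc a b → |f t| ≤ C) :
    IntervalIntegrable (fun t => f t ^ 2) volume a b :=
  intervalIntegrable_of_ae_abs_le hab (hf.pow_const 2) <| hC.mono fun t h ht => by
    rw [abs_pow]
    exact pow_le_pow_left₀ (abs_nonneg _) (h ht) 2

theorem sq_intervalIntegral_le {f : ℝ → ℝ} {a b : ℝ} (hab : a ≤ b)
    (hf : IntervalIntegrable f volume a b)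
    (hf2 : IntervalIntegrable (fun t => f t ^ 2) volume a b) :
    (∫ t in a..b, f t) ^ 2 ≤ (b - a) * ∫ t in a..b, f t ^ 2 := by
  set m := ∫ t in a..b, f t
  set S := ∫ t in a..b, f t ^ 2
  -- `0 ≤ ∫ ((b - a) f - m)²`, expanded
  have hexpand : ∫ t in a..b, ((b - a) * f t - m) ^ 2 = (b - a) * ((b - a) * S - m ^ 2) := by
    have hpt : ∀ t, ((b - a) * f t - m) ^ 2
        = (b - a) ^ 2 * f t ^ 2 - 2 * (b - a) * m * f t + m ^ 2 := fun t => by ring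
    simp_rw [hpt]
    rw [integral_add ((hf2.const_mul _).sub (hf.const_mul _)) intervalIntegrable_const,
      integral_sub (hf2.const_mul _) (hf.const_mul _), intervalIntegral.integral_const_mul,
      intervalIntegral.integral_const_mul, intervalIntegral.integral_const, smul_eq_mul]
    ring
  have hnonneg : 0 ≤ (b - a) * ((b - a) * S - m ^ 2) :=
    hexpand ▸ integral_nonneg hab fun _ _ => sq_nonneg _
  rcases hab.lt_or_eq with hlt | rfl
  · linarith [(mul_nonneg_iff_of_pos_left (sub_pos.2 hlt)).1 hnonneg]
  · simp [m]

theorem sq_sub_le_of_eq_add_integral {u x : ℝ → ℝ} {a b s t : ℝ}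
    (hu : IntervalIntegrable u volume a b)
    (hu2 : IntervalIntegrable (fun σ => u σ ^ 2) volume a b)
    (hx : ∀ τ ∈ Icc a b, x τ = x a + ∫ σ in a..τ, u σ) (hs : s ∈ Icc a b) (ht : t ∈ Icc a b) :
    (x t - x s) ^ 2 ≤ |t - s| * ∫ σ in a..b, u σ ^ 2 := by
  wlog hst : s ≤ t generalizing s t
  · rw [← neg_sub, neg_sq, abs_sub_comm]
    exact this ht hs (le_of_not_ge hst)
  have hsub : uIcc s t ⊆ uIcc a b :=
    uIcc_subset_uIcc (mem_uIcc_of_le hs.1 hs.2) (mem_uIcc_of_le ht.1 ht.2)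
  have hdiff : x t - x s = ∫ σ in s..t, u σ := by
    rw [hx t ht, hx s hs, add_sub_add_left_eq_sub, integral_interval_sub_left
      (hu.mono_set (uIcc_subset_uIcc_left (mem_uIcc_of_le ht.1 ht.2)))
      (hu.mono_set (uIcc_subset_uIcc_left (mem_uIcc_of_le hs.1 hs.2)))]
  calc (x t - x s) ^ 2 ≤ (t - s) * ∫ σ in s..t, u σ ^ 2 :=
        hdiff ▸ sq_intervalIntegral_le hst (hu.mono_set hsub) (hu2.mono_set hsub)
    _ ≤ |t - s| * ∫ σ in a..b, u σ ^ 2 := by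
        rw [abs_of_nonneg (sub_nonneg.2 hst)]
        exact mul_le_mul_of_nonneg_left (integral_mono_interval hs.1 hst ht.2
          (Filter.Eventually.of_forall fun _ => sq_nonneg _) hu2) (sub_nonneg.2 hst)

theorem half_sub_sq_mul_pow_le (x v : ℝ) (n : ℕ) :
    (x ^ 2 - v ^ 2 * x ^ (2 * n)) / 2 ≤ x ^ 2 + v * x ^ (n + 1) := by
  rw [pow_mul', pow_succ x n]
  nlinarith [sq_nonneg (x + v * x ^ n)]

theorem pow_four_le_mul_integral_sq {x : ℝ → ℝ} {E t₀ : ℝ} (hx : ContinuousOn x (Icc 0 1))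
    (hholder : ∀ s ∈ Icc (0:ℝ) 1, ∀ t ∈ Icc (0:ℝ) 1, (x t - x s) ^ 2 ≤ |t - s| * E)
    (hE : 0 < E) (ht₀ : t₀ ∈ Icc (0:ℝ) 1) (hxE : x t₀ ^ 2 ≤ E) :
    x t₀ ^ 4 ≤ 16 * E * ∫ t in (0:ℝ)..1, x t ^ 2 := by
  set ℓ := x t₀ ^ 2 / (4 * E)
  have hℓE : ℓ * (4 * E) = x t₀ ^ 2 := div_mul_cancel₀ _ (by positivity)
  have hℓ0 : 0 ≤ ℓ := by positivity
  have hℓ : ℓ ≤ 1 / 4 := by nlinarith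
  -- `[a, a + ℓ] ⊆ [0, 1]` is an interval of length `ℓ` around `t₀`
  set a := min t₀ (1 - ℓ)
  have ha0 : 0 ≤ a := le_min ht₀.1 (by linarith)
  have ha1 : a + ℓ ≤ 1 := by linarith [min_le_right t₀ (1 - ℓ)]
  have hat₀ : a ≤ t₀ ∧ t₀ ≤ a + ℓ := by
    rcases min_cases t₀ (1 - ℓ) with ⟨h, -⟩ | ⟨h, h'⟩ <;> constructor <;> linarith [ht₀.2]
  have hnear : ∀ t ∈ Icc a (a + ℓ), x t₀ ^ 2 / 4 ≤ x t ^ 2 := by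
    intro t ht
    have htI : t ∈ Icc (0:ℝ) 1 := ⟨ha0.trans ht.1, ht.2.trans ha1⟩
    have hdist : |t - t₀| ≤ ℓ := abs_le.2 ⟨by linarith [ht.1], by linarith [ht.2]⟩
    have hclose : |x t - x t₀| ≤ |x t₀ / 2| := sq_le_sq.1 <|
      calc (x t - x t₀) ^ 2 ≤ |t - t₀| * E := hholder t₀ ht₀ t htI
        _ ≤ ℓ * E := by gcongr
        _ = (x t₀ / 2) ^ 2 := by linear_combination hℓE / 4
    have hfar : |x t₀ / 2| ≤ |x t| := by
      rw [abs_div, abs_two] at hclose ⊢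
      linarith [abs_sub_abs_le_abs_sub (x t₀) (x t), abs_sub_comm (x t) (x t₀)]
    linarith [sq_le_sq.2 hfar]
  have hint : IntervalIntegrable (fun t => x t ^ 2) volume 0 1 :=
    (hx.pow 2).intervalIntegrable_of_Icc zero_le_one
  calc x t₀ ^ 4 = 16 * E * (ℓ * (x t₀ ^ 2 / 4)) := by linear_combination (-x t₀ ^ 2) * hℓE
    _ = 16 * E * ∫ _ in a..a + ℓ, x t₀ ^ 2 / 4 := by
        rw [intervalIntegral.integral_const, smul_eq_mul, add_sub_cancel_left]
    _ ≤ 16 * E * ∫ t in a..a + ℓ, x t ^ 2 := by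
        gcongr
        exact integral_mono_on (by linarith) intervalIntegrable_const
          (hint.mono_set (uIcc_subset_uIcc (mem_uIcc_of_le ha0 (by linarith))
            (mem_uIcc_of_le (by linarith) ha1))) hnear
    _ ≤ 16 * E * ∫ t in (0:ℝ)..1, x t ^ 2 := by
        gcongr
        exact integral_mono_interval ha0 (by linarith) ha1
          (Filter.Eventually.of_forall fun _ => sq_nonneg _) hint

theorem integral_sq_lt_of_integral_neg {x v : ℝ → ℝ} {a b M : ℝ} {n : ℕ} (hab : a ≤ b)
    (hx : ContinuousOn x (Icc a b)) (hv : IntervalIntegrable (fun t => v t ^ 2) volume a b)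
    (hM : ∀ t ∈ Icc a b, x t ^ 2 ≤ M)
    (hneg : ∫ t in a..b, (x t ^ 2 + v t * x t ^ (n + 1)) < 0) :
    ∫ t in a..b, x t ^ 2 < M ^ n * ∫ t in a..b, v t ^ 2 := by
  have hx2 : IntervalIntegrable (fun t => x t ^ 2) volume a b :=
    (hx.pow 2).intervalIntegrable_of_Icc hab
  have hvx : IntervalIntegrable (fun t => v t ^ 2 * x t ^ (2 * n)) volume a b :=
    hv.mul_continuousOn (by rw [uIcc_of_le hab]; exact hx.pow _)
  have hlower : (∫ t in a..b, x t ^ 2) - ∫ t in a..b, v t ^ 2 * x t ^ (2 * n)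
      ≤ 2 * ∫ t in a..b, (x t ^ 2 + v t * x t ^ (n + 1)) := by
    rw [← integral_sub hx2 hvx, ← intervalIntegral.integral_const_mul]
    refine integral_mono_on hab (hx2.sub hvx)
      ((intervalIntegrable_of_integral_ne_zero hneg.ne).const_mul 2) fun t _ => ?_
    linarith [half_sub_sq_mul_pow_le (x t) (v t) n]
  have hupper : ∫ t in a..b, v t ^ 2 * x t ^ (2 * n) ≤ M ^ n * ∫ t in a..b, v t ^ 2 := by
    rw [← intervalIntegral.integral_const_mul]
    refine integral_mono_on hab hvx (hv.const_mul _) fun t ht => ?_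
    rw [pow_mul, mul_comm (M ^ n)]
    exact mul_le_mul_of_nonneg_left (pow_le_pow_left₀ (sq_nonneg _) (hM t ht) n) (sq_nonneg _)
  linarith

theorem half_lt_energy_of_integral_neg {u v x : ℝ → ℝ} {n : ℕ} (hn : 2 ≤ n)
    (hu : IntervalIntegrable u volume 0 1)
    (hu2 : IntervalIntegrable (fun t => u t ^ 2) volume 0 1)
    (hv2 : IntervalIntegrable (fun t => v t ^ 2) volume 0 1)
    (hx : ContinuousOn x (Icc 0 1)) (hx0 : x 0 = 0)
    (hxu : ∀ t ∈ Icc (0:ℝ) 1, x t = x 0 + ∫ s in (0:ℝ)..t, u s)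
    (hneg : ∫ t in (0:ℝ)..1, (x t ^ 2 + v t * x t ^ (n + 1)) < 0) :
    1 / 2 < (∫ t in (0:ℝ)..1, u t ^ 2) + ∫ t in (0:ℝ)..1, v t ^ 2 := by
  set E₁ := ∫ t in (0:ℝ)..1, u t ^ 2
  set E₂ := ∫ t in (0:ℝ)..1, v t ^ 2
  have hE₁ : 0 ≤ E₁ := integral_nonneg zero_le_one fun _ _ => sq_nonneg _
  have hE₂ : 0 ≤ E₂ := integral_nonneg zero_le_one fun _ _ => sq_nonneg _
  obtain ⟨t₀, ht₀, hmaxOn⟩ :=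
    isCompact_Icc.exists_isMaxOn (nonempty_Icc.2 zero_le_one) (hx.pow 2)
  set M := x t₀ ^ 2
  have hmax : ∀ t ∈ Icc (0:ℝ) 1, x t ^ 2 ≤ M := fun t ht => hmaxOn ht
  have hholder : ∀ s ∈ Icc (0:ℝ) 1, ∀ t ∈ Icc (0:ℝ) 1, (x t - x s) ^ 2 ≤ |t - s| * E₁ :=
    fun s hs t ht => sq_sub_le_of_eq_add_integral hu hu2 hxu hs ht
  have hME : M ≤ E₁ := by
    have h := hholder 0 (left_mem_Icc.2 zero_le_one) t₀ ht₀
    rw [hx0, sub_zero, sub_zero, abs_of_nonneg ht₀.1] at h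
    nlinarith [ht₀.2]
  have hM : 0 < M := by
    refine (sq_nonneg _).lt_of_ne fun hM => hneg.ne' ?_
    have hzero : ∀ t ∈ Icc (0:ℝ) 1, x t = 0 := fun t ht => pow_eq_zero_iff two_ne_zero |>.1 <|
      le_antisymm (hM ▸ hmax t ht) (sq_nonneg _)
    rw [integral_congr (g := fun _ => 0) fun t ht => by
      simp [hzero t (by rwa [uIcc_of_le zero_le_one] at ht)]]
    simp
  have hA : M ^ 2 ≤ 16 * E₁ * ∫ t in (0:ℝ)..1, x t ^ 2 := by
    rw [← pow_mul]
    exact pow_four_le_mul_integral_sq hx hholder (hM.trans_le hME) ht₀ hME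
  have hA' := integral_sq_lt_of_integral_neg zero_le_one hx hv2 hmax hneg
  by_contra! hsmall
  have hMn : M ^ n ≤ M ^ 2 := pow_le_pow_of_le_one hM.le (by linarith) hn
  have hM2 : M ^ 2 < 16 * E₁ * E₂ * M ^ 2 :=
    calc M ^ 2 ≤ 16 * E₁ * ∫ t in (0:ℝ)..1, x t ^ 2 := hA
      _ < 16 * E₁ * (M ^ n * E₂) := by gcongr; linarith
      _ = 16 * E₁ * E₂ * M ^ n := by ring
      _ ≤ 16 * E₁ * E₂ * M ^ 2 := by gcongr
  have h16 : 1 < 16 * E₁ * E₂ := by nlinarith [pow_pos hM 2]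
  nlinarith [sq_nonneg (E₁ - E₂)]

theorem quarter_lt_of_mem_planarCostSet {k : ℕ} (hk : 3 ≤ k) {w z r : ℝ} (hzw : z < w)
    (hr : r ∈ planarCostSet k 1 (0, w) (0, z)) : 1 / 4 < r := by
  obtain ⟨u₁, u₂, x₁, x₂, hu₁, hu₂, ⟨C, hC⟩, hx₁, -, hx₁0, hx₂0, -, hx₂1, hode₁, hode₂, rfl⟩ := hr
  obtain ⟨n, rfl⟩ : ∃ n, k = n + 1 := ⟨k - 1, by omega⟩
  have hC₁ : ∀ᵐ t ∂volume, t ∈ Icc (0:ℝ) 1 → |u₁ t| ≤ C := hC.mono fun t h ht => (h ht).1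
  have hC₂ : ∀ᵐ t ∂volume, t ∈ Icc (0:ℝ) 1 → |u₂ t| ≤ C := hC.mono fun t h ht => (h ht).2
  have hu₁2 := intervalIntegrable_sq_of_ae_abs_le zero_le_one hu₁ hC₁
  have hu₂2 := intervalIntegrable_sq_of_ae_abs_le zero_le_one hu₂ hC₂
  have hneg : ∫ t in (0:ℝ)..1, (x₁ t ^ 2 + u₂ t * x₁ t ^ (n + 1)) < 0 := by
    have := hode₂ 1 (right_mem_Icc.2 zero_le_one)
    simp only at hx₂0 hx₂1
    linarith
  rw [integral_add hu₁2 hu₂2]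
  linarith [half_lt_energy_of_integral_neg (by omega)
    (intervalIntegrable_of_ae_abs_le zero_le_one hu₁ hC₁) hu₁2 hu₂2 hx₁ hx₁0 hode₁ hneg]

theorem zero_mem_planarCostSet_self (k : ℕ) (T w : ℝ) : 0 ∈ planarCostSet k T (0, w) (0, w) :=
  ⟨0, 0, 0, fun _ => w, measurable_const, measurable_const,
    ⟨0, Filter.Eventually.of_forall fun _ _ => by simp⟩, continuousOn_const, continuousOn_const,
    rfl, rfl, rfl, rfl, fun _ _ => by simp, fun _ _ => by simp, by simp⟩

theorem nonneg_of_mem_planarCostSet {k : ℕ} {T : ℝ} (hT : 0 ≤ T) {a b : ℝ × ℝ} {r : ℝ}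
    (hr : r ∈ planarCostSet k T a b) : 0 ≤ r := by
  obtain ⟨u₁, u₂, -, -, -, -, -, -, -, -, -, -, -, -, -, rfl⟩ := hr
  have : 0 ≤ ∫ t in (0:ℝ)..T, (u₁ t ^ 2 + u₂ t ^ 2) := integral_nonneg hT fun t _ => by positivity
  positivity

theorem planarCost_self {k : ℕ} {T : ℝ} (hT : 0 ≤ T) (w : ℝ) : planarCost k T (0, w) (0, w) = 0 :=
  le_antisymm
    (csInf_le ⟨0, fun _ => nonneg_of_mem_planarCostSet hT⟩ (zero_mem_planarCostSet_self k T w))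
    (le_csInf ⟨0, zero_mem_planarCostSet_self k T w⟩ fun _ => nonneg_of_mem_planarCostSet hT)

theorem planarCostSet_nonempty (k : ℕ) (w z : ℝ) : (planarCostSet k 1 (0, w) (0, z)).Nonempty := by
  set x₁ : ℝ → ℝ := fun t => t - t ^ 2
  have hx₁ : Continuous x₁ := by fun_prop
  have hpos : 0 < ∫ t in (0:ℝ)..1, x₁ t ^ k :=
    intervalIntegral_pos_of_pos_on ((hx₁.pow k).intervalIntegrable 0 1)
      (fun t ht => pow_pos (by nlinarith [ht.1, ht.2]) k) zero_lt_one
  set β := (z - w - ∫ t in (0:ℝ)..1, x₁ t ^ 2) / ∫ t in (0:ℝ)..1, x₁ t ^ k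
  have hf : Continuous fun s => x₁ s ^ 2 + β * x₁ s ^ k := by fun_prop
  set x₂ : ℝ → ℝ := fun t => w + ∫ s in (0:ℝ)..t, (x₁ s ^ 2 + β * x₁ s ^ k)
  have hx₂ : Continuous x₂ :=
    continuous_const.add (continuous_primitive (fun _ _ => hf.intervalIntegrable _ _) 0)
  have hx₂1 : x₂ 1 = z := by
    simp only [x₂]
    rw [integral_add (f := fun s => x₁ s ^ 2) (g := fun s => β * x₁ s ^ k)
      ((hx₁.pow 2).intervalIntegrable 0 1)
      ((continuous_const.mul (hx₁.pow k)).intervalIntegrable 0 1),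
      intervalIntegral.integral_const_mul, div_mul_cancel₀ _ hpos.ne']
    ring
  have hx₁u : ∀ t, x₁ t = x₁ 0 + ∫ s in (0:ℝ)..t, (1 - 2 * s) := fun t => by
    rw [integral_eq_sub_of_hasDerivAt (f := x₁) (fun s _ => ?_)
      ((by fun_prop : Continuous fun s : ℝ => 1 - 2 * s).intervalIntegrable _ _)]
    · ring
    · exact ((hasDerivAt_id' s).sub (hasDerivAt_pow 2 s)).congr_deriv (by norm_num)
  refine ⟨_, fun t => 1 - 2 * t, fun _ => β, x₁, x₂, by fun_prop, measurable_const,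
    ⟨max 1 |β|, Filter.Eventually.of_forall fun t ht =>
      ⟨(abs_le.2 ⟨by linarith [ht.2], by linarith [ht.1]⟩).trans (le_max_left _ _),
        le_max_right _ _⟩⟩,
    hx₁.continuousOn, hx₂.continuousOn, by simp [x₁], by simp [x₂], by simp [x₁], hx₂1,
    fun t _ => hx₁u t, fun t _ => by simp [x₂], rfl⟩

/-- **Discontinuity of the cost, quantitative form** (Proposition in Section 2):
for `k ≥ 3`, the cost of staying at `(0,w)` in time `1` is zero, while going from
`(0,w)` to `(0,z)` with `z < w` costs at least a uniform positive constant `K`. -/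
theorem planarCost_diag_zero_and_lower_bound (k : ℕ) (hk : 3 ≤ k) :
    (∀ w : ℝ, planarCost k 1 (0, w) (0, w) = 0) ∧
    ∃ K : ℝ, 0 < K ∧ ∀ w z : ℝ, z < w → K ≤ planarCost k 1 (0, w) (0, z) :=
  ⟨planarCost_self zero_le_one, 1 / 4, by norm_num, fun w z hzw =>
    le_csInf (planarCostSet_nonempty k w z) fun _ hr =>
      (quarter_lt_of_mem_planarCostSet hk hzw hr).le⟩
end
end

section
/- Let M be a compact metric space and let c : (0,∞) × M × M → ℝ, written c_t(x,y), be continuous and satisfy the dynamic programming identity c_{s+t}(x,y) = inf_{z ∈ M} [c_s(x,z) + c_t(z,y)] for all s, t > 0 and all x, y ∈ M. Then for each a > 0 the family of functions {(x,y) ↦ c_t(x,y) : t ≥ a} is uniformly equicontinuous on M × M. -/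
/-! Fix `s = a/2`. For `t ≥ a` the dynamic programming identity writes `c_t(x, y)` both as
`inf_z [c_s(x, z) + c_{t-s}(z, y)]` and as `inf_z [c_{t-s}(x, z) + c_s(z, y)]`. An infimum moves
by at most the uniform distance of the functions it is taken over, so moving `x` (resp. `y`) moves
`c_t` by at most the oscillation of the single function `c_s` in its first (resp. second)
variable, and `c_s` is uniformly continuous on the compact space `M × M`. -/

open Set

lemma ciInf_le_ciInf_add {ι : Type*} [Nonempty ι] {f g : ι → ℝ} {e : ℝ}
    (hf : BddBelow (range f)) (h : ∀ i, f i ≤ g i + e) : ⨅ i, f i ≤ (⨅ i, g i) + e := by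
  suffices (⨅ i, f i) - e ≤ ⨅ i, g i by linarith
  exact le_ciInf fun i => by linarith [ciInf_le hf i, h i]

lemma abs_ciInf_sub_ciInf_le {ι : Type*} [Nonempty ι] {f g : ι → ℝ} {e : ℝ}
    (hf : BddBelow (range f)) (hg : BddBelow (range g)) (h : ∀ i, |f i - g i| ≤ e) :
    |(⨅ i, f i) - ⨅ i, g i| ≤ e := by
  have hfg := ciInf_le_ciInf_add (g := g) hf fun i => by linarith [(abs_sub_le_iff.1 (h i)).1]
  have hgf := ciInf_le_ciInf_add (g := f) hg fun i => by linarith [(abs_sub_le_iff.1 (h i)).2]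
  rw [abs_sub_le_iff]
  constructor <;> linarith

lemma exists_pos_forall_dist_lt_abs_sub_lt {M : Type*} [PseudoMetricSpace M] [CompactSpace M]
    {f : M → M → ℝ} (hf : Continuous fun p : M × M => f p.1 p.2) {ε : ℝ} (hε : 0 < ε) :
    ∃ δ > 0, ∀ x₁ y₁ x₂ y₂ : M,
      dist x₁ x₂ < δ → dist y₁ y₂ < δ → |f x₁ y₁ - f x₂ y₂| < ε := by
  obtain ⟨δ, hδ, hfδ⟩ :=
    Metric.uniformContinuous_iff.1 (CompactSpace.uniformContinuous_of_continuous hf) ε hε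
  refine ⟨δ, hδ, fun x₁ y₁ x₂ y₂ hx hy => ?_⟩
  have hxy : dist (x₁, y₁) (x₂, y₂) < δ := by rw [Prod.dist_eq]; exact max_lt hx hy
  simpa only [Real.dist_eq] using hfδ hxy

section DynamicProgramming

variable {M : Type*} [TopologicalSpace M] {c : ℝ → M → M → ℝ}

lemma continuous_cost_of_pos
    (hc : ContinuousOn (fun p : ℝ × M × M => c p.1 p.2.1 p.2.2) {p | 0 < p.1})
    {s : ℝ} (hs : 0 < s) : Continuous fun p : M × M => c s p.1 p.2 :=
  hc.comp_continuous (Continuous.prodMk_right s) fun _ => hs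

variable [CompactSpace M]

lemma bddBelow_range_cost_add_cost
    (hc : ContinuousOn (fun p : ℝ × M × M => c p.1 p.2.1 p.2.2) {p | 0 < p.1})
    {s r : ℝ} (hs : 0 < s) (hr : 0 < r) (x y : M) :
    BddBelow (range fun z => c s x z + c r z y) :=
  (isCompact_range ((continuous_cost_of_pos hc hs).comp (Continuous.prodMk_right x) |>.add
    ((continuous_cost_of_pos hc hr).comp (Continuous.prodMk_left y)))).bddBelow

variable [Nonempty M]
  (hc : ContinuousOn (fun p : ℝ × M × M => c p.1 p.2.1 p.2.2) {p | 0 < p.1})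
  (hdpp : ∀ s t : ℝ, 0 < s → 0 < t → ∀ x y : M,
    c (s + t) x y = ⨅ z : M, (c s x z + c t z y))
include hc hdpp

lemma abs_cost_sub_cost_left_le {s t η : ℝ} (hs : 0 < s) (hst : s < t) {x₁ x₂ : M}
    (h : ∀ z, |c s x₁ z - c s x₂ z| ≤ η) (y : M) : |c t x₁ y - c t x₂ y| ≤ η := by
  have hr : 0 < t - s := sub_pos.2 hst
  have split (x : M) : c t x y = ⨅ z, (c s x z + c (t - s) z y) := by
    simpa only [add_sub_cancel] using hdpp s (t - s) hs hr x y
  rw [split x₁, split x₂]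
  refine abs_ciInf_sub_ciInf_le (bddBelow_range_cost_add_cost hc hs hr x₁ y)
    (bddBelow_range_cost_add_cost hc hs hr x₂ y) fun z => ?_
  rw [add_sub_add_right_eq_sub]
  exact h z

lemma abs_cost_sub_cost_right_le {s t η : ℝ} (hs : 0 < s) (hst : s < t) {y₁ y₂ : M}
    (h : ∀ z, |c s z y₁ - c s z y₂| ≤ η) (x : M) : |c t x y₁ - c t x y₂| ≤ η := by
  have hr : 0 < t - s := sub_pos.2 hst
  have split (y : M) : c t x y = ⨅ z, (c (t - s) x z + c s z y) := by
    simpa only [sub_add_cancel] using hdpp (t - s) s hr hs x y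
  rw [split y₁, split y₂]
  refine abs_ciInf_sub_ciInf_le (bddBelow_range_cost_add_cost hc hr hs x y₁)
    (bddBelow_range_cost_add_cost hc hr hs x y₂) fun z => ?_
  rw [add_sub_add_left_eq_sub]
  exact h z

end DynamicProgramming

/-- **Equicontinuity of the costs** (Theorem `cpctc`, first part): if `M` is a compact
metric space and `c : (0,∞) × M × M → ℝ` is continuous and satisfies the dynamic
programming identity, then for each `a > 0` the family `{c_t : t ≥ a}` is uniformly
equicontinuous on `M × M`. -/
theorem cost_family_equicontinuous (M : Type*) [MetricSpace M] [CompactSpace M] [Nonempty M]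
    (c : ℝ → M → M → ℝ)
    (hc : ContinuousOn (fun p : ℝ × M × M => c p.1 p.2.1 p.2.2) {p | 0 < p.1})
    (hdpp : ∀ s t : ℝ, 0 < s → 0 < t → ∀ x y : M,
      c (s + t) x y = ⨅ z : M, (c s x z + c t z y))
    (a : ℝ) (ha : 0 < a) :
    ∀ ε > 0, ∃ δ > 0, ∀ t : ℝ, a ≤ t → ∀ x₁ y₁ x₂ y₂ : M,
      dist x₁ x₂ < δ → dist y₁ y₂ < δ → |c t x₁ y₁ - c t x₂ y₂| < ε := by
  intro ε hε
  have hs : 0 < a / 2 := half_pos ha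
  obtain ⟨δ, hδ, hcδ⟩ :=
    exists_pos_forall_dist_lt_abs_sub_lt (continuous_cost_of_pos hc hs) (by positivity : 0 < ε / 3)
  refine ⟨δ, hδ, fun t ht x₁ y₁ x₂ y₂ hx hy => ?_⟩
  have hst : a / 2 < t := by linarith
  have hx' : |c t x₁ y₁ - c t x₂ y₁| ≤ ε / 3 := abs_cost_sub_cost_left_le hc hdpp hs hst
    (fun z => (hcδ x₁ z x₂ z hx (by rwa [dist_self])).le) y₁
  have hy' : |c t x₂ y₁ - c t x₂ y₂| ≤ ε / 3 := abs_cost_sub_cost_right_le hc hdpp hs hst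
    (fun z => (hcδ z y₁ z y₂ (by rwa [dist_self]) hy).le) x₂
  calc |c t x₁ y₁ - c t x₂ y₂|
      ≤ |c t x₁ y₁ - c t x₂ y₁| + |c t x₂ y₁ - c t x₂ y₂| := abs_sub_le _ _ _
    _ < ε := by linarith
end

section
/- Let M be a compact metric space and let c : (0,∞) × M × M → ℝ, written c_t(x,y), be continuous and satisfy the dynamic programming identity c_{s+t}(x,y) = inf_{z ∈ M} [c_s(x,z) + c_t(z,y)] for all s, t > 0 and all x, y ∈ M. Then there exists a constant h ∈ ℝ such that for every a > 0 there is a constant K > 0 with |c_t(x,y) − h t| ≤ K for all t ≥ a and all x, y ∈ M. -/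
open Filter Topology

section Aux
variable {M : Type*} [MetricSpace M] [CompactSpace M] [Nonempty M]
variable (c : ℝ → M → M → ℝ)

lemma cont_fixed (hc : ContinuousOn (fun p : ℝ × M × M => c p.1 p.2.1 p.2.2) {p | 0 < p.1})
    {s : ℝ} (hs : 0 < s) : Continuous (fun p : M × M => c s p.1 p.2) :=
  hc.comp_continuous (continuous_const.prodMk continuous_id) (fun _ => hs)

lemma bdd_c (hc : ContinuousOn (fun p : ℝ × M × M => c p.1 p.2.1 p.2.2) {p | 0 < p.1})
    {a b : ℝ} (ha : 0 < a) :
    ∃ B : ℝ, 0 ≤ B ∧ ∀ t, a ≤ t → t ≤ b → ∀ x y : M, |c t x y| ≤ B := by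
  have hcomp : IsCompact ((Set.Icc a b) ×ˢ (Set.univ : Set (M × M))) :=
    isCompact_Icc.prod isCompact_univ
  have hsub : (Set.Icc a b) ×ˢ (Set.univ : Set (M × M)) ⊆ {p : ℝ × M × M | 0 < p.1} := by
    rintro ⟨t, x, y⟩ ⟨⟨h1, _⟩, _⟩
    exact lt_of_lt_of_le ha h1
  obtain ⟨B, hB⟩ := hcomp.exists_bound_of_continuousOn (hc.mono hsub)
  refine ⟨max B 0, le_max_right _ _, fun t h1 h2 x y => ?_⟩
  have := hB (t, x, y) ⟨⟨h1, h2⟩, trivial⟩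
  rw [Real.norm_eq_abs] at this
  exact this.trans (le_max_left _ _)

lemma split (hc : ContinuousOn (fun p : ℝ × M × M => c p.1 p.2.1 p.2.2) {p | 0 < p.1})
    (hdpp : ∀ s t : ℝ, 0 < s → 0 < t → ∀ x y : M,
      c (s + t) x y = ⨅ z : M, (c s x z + c t z y))
    {s t : ℝ} (hs : 0 < s) (ht : 0 < t) (x y : M) :
    ∃ z, c (s + t) x y = c s x z + c t z y ∧ ∀ w, c (s + t) x y ≤ c s x w + c t w y := by
  have hF : Continuous (fun z : M => c s x z + c t z y) := by
    have h1 : Continuous (fun z : M => c s x z) :=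
      (cont_fixed c hc hs).comp (continuous_const.prodMk continuous_id)
    have h2 : Continuous (fun z : M => c t z y) :=
      (cont_fixed c hc ht).comp (continuous_id.prodMk continuous_const)
    exact h1.add h2
  obtain ⟨z, -, hz⟩ := isCompact_univ.exists_isMinOn Set.univ_nonempty hF.continuousOn
  have hz' : ∀ w : M, c s x z + c t z y ≤ c s x w + c t w y := fun w => hz (Set.mem_univ w)
  have hbdd : BddBelow (Set.range (fun z : M => c s x z + c t z y)) := by
    refine ⟨c s x z + c t z y, ?_⟩
    rintro _ ⟨w, rfl⟩
    exact hz' w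
  have heq : c (s + t) x y = ⨅ w : M, (c s x w + c t w y) := hdpp s t hs ht x y
  have hval : c (s + t) x y = c s x z + c t z y := by
    rw [heq]
    exact le_antisymm (ciInf_le hbdd z) (le_ciInf hz')
  exact ⟨z, hval, fun w => by rw [heq]; exact ciInf_le hbdd w⟩

end Aux

/-- **Linear growth of the cost** (Theorem `cpctc`, second part): if `M` is a compact
metric space and `c : (0,∞) × M × M → ℝ` is continuous and satisfies the dynamic
programming identity, then there is a constant `h` such that for every `a > 0` there
is `K > 0` with `|c_t(x,y) − h t| ≤ K` for all `t ≥ a` and all `x, y ∈ M`. -/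
theorem cost_linear_growth (M : Type*) [MetricSpace M] [CompactSpace M] [Nonempty M]
    (c : ℝ → M → M → ℝ)
    (hc : ContinuousOn (fun p : ℝ × M × M => c p.1 p.2.1 p.2.2) {p | 0 < p.1})
    (hdpp : ∀ s t : ℝ, 0 < s → 0 < t → ∀ x y : M,
      c (s + t) x y = ⨅ z : M, (c s x z + c t z y)) :
    ∃ h : ℝ, ∀ a : ℝ, 0 < a → ∃ K : ℝ, 0 < K ∧
      ∀ t : ℝ, a ≤ t → ∀ x y : M, |c t x y - h * t| ≤ K := by
  classical
  obtain ⟨x₀⟩ := ‹Nonempty M›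
  set f : ℝ → ℝ := fun t => c t x₀ x₀ with hf
  -- bound at time 1/2
  obtain ⟨B, hB0, hB⟩ := bdd_c c hc (a := 1/2) (b := 1/2) (by norm_num)
  set D : ℝ := 4 * B with hD
  have hD0 : 0 ≤ D := by positivity
  -- oscillation bound
  have osc : ∀ T, 1 < T → ∀ x y x' y' : M, c T x y ≤ c T x' y' + D := by
    intro T hT x y x' y'
    have h1 : (0:ℝ) < 1/2 := by norm_num
    have h2 : (0:ℝ) < T - 1/2 := by linarith
    have h3 : (0:ℝ) < T - 1 := by linarith
    have e1 : (1/2 : ℝ) + (T - 1/2) = T := by ring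
    have e2 : (T - 1 : ℝ) + 1/2 = T - 1/2 := by ring
    obtain ⟨z, hz1, -⟩ := split c hc hdpp h1 h2 x' y'
    obtain ⟨w, hw1, -⟩ := split c hc hdpp h3 h1 z y'
    obtain ⟨-, -, hup1⟩ := split c hc hdpp h1 h2 x y
    obtain ⟨-, -, hup2⟩ := split c hc hdpp h3 h1 z y
    rw [e1] at hz1 hup1
    rw [e2] at hw1 hup2
    have u1 : c T x y ≤ c (1/2) x z + c (T - 1/2) z y := hup1 z
    have u2 : c (T - 1/2) z y ≤ c (T-1) z w + c (1/2) w y := hup2 w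
    have b1 := abs_le.1 (hB (1/2) le_rfl le_rfl x z)
    have b2 := abs_le.1 (hB (1/2) le_rfl le_rfl x' z)
    have b3 := abs_le.1 (hB (1/2) le_rfl le_rfl w y)
    have b4 := abs_le.1 (hB (1/2) le_rfl le_rfl w y')
    rw [hw1] at hz1
    rw [hD]
    linarith [b1.1, b1.2, b2.1, b2.2, b3.1, b3.2, b4.1, b4.2]
  -- quasi-additivity of f on (1,∞)
  have qa : ∀ s t : ℝ, 1 < s → 1 < t → |f (s + t) - f s - f t| ≤ 2 * D := by
    intro s t hs ht
    have hs0 : (0:ℝ) < s := by linarith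
    have ht0 : (0:ℝ) < t := by linarith
    obtain ⟨z, hz1, hz2⟩ := split c hc hdpp hs0 ht0 x₀ x₀
    have upper : f (s + t) ≤ f s + f t := hz2 x₀
    have l1 : c s x₀ x₀ ≤ c s x₀ z + D := osc s hs x₀ x₀ x₀ z
    have l2 : c t x₀ x₀ ≤ c t z x₀ + D := osc t ht x₀ x₀ z x₀
    have lower : f s + f t - 2 * D ≤ f (s + t) := by
      simp only [hf]
      rw [hz1]; linarith
    rw [abs_le]; constructor <;> [linarith; linarith]
  -- doubling estimate
  have dbl : ∀ n : ℕ, ∀ t : ℝ, 1 < t →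
      |f (2 ^ n * t) - 2 ^ n * f t| ≤ (2 ^ n - 1) * (2 * D) := by
    intro n
    induction n with
    | zero => intro t ht; simp
    | succ n ih =>
      intro t ht
      have hpow : (1:ℝ) ≤ 2 ^ n := one_le_pow₀ (by norm_num)
      have htn : 1 < 2 ^ n * t := by nlinarith
      have key := qa (2 ^ n * t) (2 ^ n * t) htn htn
      have e : (2:ℝ) ^ n * t + 2 ^ n * t = 2 ^ (n+1) * t := by ring
      rw [e] at key
      have ih' := ih t ht
      calc |f (2 ^ (n+1) * t) - 2 ^ (n+1) * f t|
          ≤ |f (2 ^ (n+1) * t) - 2 * f (2 ^ n * t)| + |2 * f (2 ^ n * t) - 2 ^ (n+1) * f t| :=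
            abs_sub_le _ _ _
        _ ≤ 2 * D + 2 * |f (2 ^ n * t) - 2 ^ n * f t| := by
            refine add_le_add ?_ ?_
            · calc |f (2 ^ (n+1) * t) - 2 * f (2 ^ n * t)|
                  = |f (2 ^ (n+1) * t) - f (2 ^ n * t) - f (2 ^ n * t)| := by ring_nf
                _ ≤ 2 * D := key
            · rw [show 2 * f (2 ^ n * t) - 2 ^ (n+1) * f t
                    = 2 * (f (2 ^ n * t) - 2 ^ n * f t) by ring, abs_mul]
              simp [abs_of_nonneg]
        _ ≤ 2 * D + 2 * ((2 ^ n - 1) * (2 * D)) := by linarith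
        _ = (2 ^ (n+1) - 1) * (2 * D) := by ring
  -- convergence of f(2^n t)/2^n
  have lim_ex : ∀ t : ℝ, ∃ l : ℝ, 1 < t →
      Tendsto (fun n : ℕ => f (2 ^ n * t) / 2 ^ n) atTop (𝓝 l) := by
    intro t
    by_cases ht : 1 < t
    · have hcau : CauchySeq (fun n : ℕ => f (2 ^ n * t) / 2 ^ n) := by
        apply cauchySeq_of_le_geometric (r := 1/2) (C := D) (by norm_num)
        intro n
        have hpow : (1:ℝ) ≤ 2 ^ n := one_le_pow₀ (by norm_num)
        have hp0 : (0:ℝ) < 2 ^ n := by positivity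
        have htn : 1 < 2 ^ n * t := by nlinarith
        have key := qa (2 ^ n * t) (2 ^ n * t) htn htn
        have e : (2:ℝ) ^ n * t + 2 ^ n * t = 2 ^ (n+1) * t := by ring
        rw [e] at key
        rw [Real.dist_eq]
        have e2 : f (2 ^ n * t) / 2 ^ n - f (2 ^ (n+1) * t) / 2 ^ (n+1)
            = -(f (2 ^ (n+1) * t) - f (2 ^ n * t) - f (2 ^ n * t)) / 2 ^ (n+1) := by
          field_simp; ring
        rw [e2, abs_div, abs_neg, abs_of_pos (show (0:ℝ) < 2 ^ (n+1) by positivity)]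
        rw [div_le_iff₀ (by positivity : (0:ℝ) < 2 ^ (n+1))]
        refine key.trans (le_of_eq ?_)
        have : ((1:ℝ)/2)^n * 2^(n+1) = 2 := by
          rw [one_div, inv_pow, pow_succ]
          field_simp
        nlinarith [this]
      obtain ⟨l, hl⟩ := cauchySeq_tendsto_of_complete hcau
      exact ⟨l, fun _ => hl⟩
    · exact ⟨0, fun h => absurd h ht⟩
  choose L hL using lim_ex
  -- L is close to f
  have Lclose : ∀ t : ℝ, 1 < t → |f t - L t| ≤ 2 * D := by
    intro t ht
    have htend : Tendsto (fun n : ℕ => |f t - f (2 ^ n * t) / 2 ^ n|) atTop (𝓝 |f t - L t|) :=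
      ((tendsto_const_nhds.sub (hL t ht)).abs)
    refine le_of_tendsto htend (Eventually.of_forall fun n => ?_)
    have hp0 : (0:ℝ) < 2 ^ n := by positivity
    have hd := dbl n t ht
    have e0 : f t - f (2 ^ n * t) / 2 ^ n = (2 ^ n * f t - f (2 ^ n * t)) / 2 ^ n := by
      field_simp
    rw [e0, abs_div, abs_of_pos hp0, abs_sub_comm, div_le_iff₀ hp0]
    calc |f (2 ^ n * t) - 2 ^ n * f t| ≤ (2 ^ n - 1) * (2 * D) := hd
      _ ≤ 2 ^ n * (2 * D) := by nlinarith
      _ = 2 * D * 2 ^ n := by ring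
  -- additivity of L on (1,∞)
  have Ladd : ∀ s t : ℝ, 1 < s → 1 < t → L (s + t) = L s + L t := by
    intro s t hs ht
    have h1 := hL (s + t) (by linarith)
    have h2 := (hL s hs).add (hL t ht)
    have hdiff : Tendsto (fun n : ℕ =>
        f (2 ^ n * (s + t)) / 2 ^ n - (f (2 ^ n * s) / 2 ^ n + f (2 ^ n * t) / 2 ^ n))
        atTop (𝓝 0) := by
      have hgeo : Tendsto (fun n : ℕ => (2 * D) * (1/2 : ℝ) ^ n) atTop (𝓝 0) := by
        have := (tendsto_pow_atTop_nhds_zero_of_lt_one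
          (by norm_num : (0:ℝ) ≤ 1/2) (by norm_num : (1:ℝ)/2 < 1)).const_mul (2 * D)
        simpa using this
      refine squeeze_zero_norm (fun n => ?_) hgeo
      have hpow : (1:ℝ) ≤ 2 ^ n := one_le_pow₀ (by norm_num)
      have hp0 : (0:ℝ) < 2 ^ n := by positivity
      have hsn : 1 < 2 ^ n * s := by nlinarith
      have htn : 1 < 2 ^ n * t := by nlinarith
      have key := qa (2 ^ n * s) (2 ^ n * t) hsn htn
      have e : (2:ℝ) ^ n * s + 2 ^ n * t = 2 ^ n * (s + t) := by ring
      rw [e] at key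
      have e2 : f (2 ^ n * (s + t)) / 2 ^ n - (f (2 ^ n * s) / 2 ^ n + f (2 ^ n * t) / 2 ^ n)
          = (f (2 ^ n * (s + t)) - f (2 ^ n * s) - f (2 ^ n * t)) / 2 ^ n := by
        field_simp
        ring
      rw [Real.norm_eq_abs, e2, abs_div, abs_of_pos hp0, div_le_iff₀ hp0]
      have e3 : (1/2 : ℝ) ^ n * 2 ^ n = 1 := by
        rw [one_div, inv_pow]
        field_simp
      nlinarith [key, e3]
    have h3 : Tendsto (fun n : ℕ => f (2 ^ n * (s + t)) / 2 ^ n) atTop (𝓝 (0 + (L s + L t))) := by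
      have := hdiff.add h2
      refine this.congr fun n => ?_
      ring
    rw [zero_add] at h3
    exact tendsto_nhds_unique h1 h3
  -- the linear rate
  set h : ℝ := L 2 / 2 with hh
  refine ⟨h, ?_⟩
  -- iteration of additivity
  have Lit : ∀ m : ℕ, ∀ t : ℝ, 1 < t → L (2 * m + t) = 2 * m * h + L t := by
    intro m
    induction m with
    | zero => intro t ht; norm_num
    | succ m ih =>
      intro t ht
      have hm0 : (0:ℝ) ≤ 2 * (m:ℝ) := by positivity
      have hmt : 1 < 2 * (m:ℝ) + t := by linarith
      have hL2 : L 2 = 2 * h := by rw [hh]; ring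
      push_cast
      rw [show 2 * ((m:ℝ) + 1) + t = 2 + (2 * (m:ℝ) + t) by ring,
        Ladd 2 (2 * (m:ℝ) + t) (by norm_num) hmt, hL2, ih t ht]
      ring
  -- bound for f on [2,4]
  obtain ⟨B2, hB20, hB2⟩ := bdd_c c hc (a := 2) (b := 4) (by norm_num)
  set C1 : ℝ := 3 * D + (B2 + 2 * D) + 4 * |h| with hC1
  have hC10 : 0 ≤ C1 := by positivity
  -- main estimate for large times
  have main : ∀ T : ℝ, 2 < T → ∀ x y : M, |c T x y - h * T| ≤ C1 + D := by
    intro T hT x y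
    set m : ℕ := ⌊(T - 2) / 2⌋₊ with hm
    have h02 : (0:ℝ) ≤ (T - 2) / 2 := by linarith
    have hmle : (m:ℝ) ≤ (T - 2) / 2 := Nat.floor_le h02
    have hmlt : (T - 2) / 2 < m + 1 := Nat.lt_floor_add_one _
    set r : ℝ := T - 2 * m with hr
    have hr2 : 2 ≤ r := by rw [hr]; linarith
    have hr4 : r ≤ 4 := by rw [hr]; linarith
    have hr1 : 1 < r := by linarith
    have hT1 : 1 < T := by linarith
    have hTeq : T = 2 * m + r := by rw [hr]; ring
    have hLT : L T = 2 * m * h + L r := by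
      rw [hTeq]; exact Lit m r hr1
    have hfr := abs_le.1 (hB2 r hr2 hr4 x₀ x₀)
    have hLr := abs_le.1 (Lclose r hr1)
    have hfT := abs_le.1 (Lclose T hT1)
    have hhr := abs_le.1 (le_refl |h * r|)
    have hhr4 : |h * r| ≤ 4 * |h| := by
      rw [abs_mul, abs_of_nonneg (by linarith : (0:ℝ) ≤ r)]
      nlinarith [abs_nonneg h]
    have key : |f T - h * T| ≤ 2 * D + (B2 + 2 * D) + 4 * |h| := by
      have e : f T - h * T = (f T - L T) + (L r - f r) + f r - h * r := by
        rw [hLT]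
        rw [hTeq]
        ring
      rw [e, abs_le]
      have := abs_le.1 hhr4
      constructor <;> [linarith [neg_abs_le (h*r), le_abs_self (h*r)];
        linarith [neg_abs_le (h*r), le_abs_self (h*r)]]
    have o1 : c T x y ≤ c T x₀ x₀ + D := osc T hT1 x y x₀ x₀
    have o2 : c T x₀ x₀ ≤ c T x y + D := osc T hT1 x₀ x₀ x y
    have hfT2 := abs_le.1 key
    rw [abs_le]
    have : f T = c T x₀ x₀ := rfl
    constructor <;> [skip; skip] <;>
      · rw [hC1]
        simp only [hf] at hfT2
        linarith [hfT2.1, hfT2.2]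
  -- conclusion
  intro a ha
  obtain ⟨Ba, hBa0, hBa⟩ := bdd_c c hc (a := min a 3) (b := 3) (lt_min ha (by norm_num))
  refine ⟨max (C1 + D) (Ba + 3 * |h|) + 1, ?_, ?_⟩
  · have h1 : (0:ℝ) ≤ C1 + D := by linarith
    have := le_max_left (C1 + D) (Ba + 3 * |h|)
    linarith
  · intro t hta x y
    by_cases h3 : t ≤ 3
    · have hmin : min a 3 ≤ t := le_trans (min_le_left a 3) hta
      have hbt := abs_le.1 (hBa t hmin h3 x y)
      have ht0 : 0 < t := lt_of_lt_of_le ha hta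
      have hht : |h * t| ≤ 3 * |h| := by
        rw [abs_mul, abs_of_pos ht0]
        nlinarith [abs_nonneg h]
      have : |c t x y - h * t| ≤ Ba + 3 * |h| := by
        rw [abs_le]
        constructor <;>
          linarith [neg_abs_le (h * t), le_abs_self (h * t), (abs_le.1 hht).1, (abs_le.1 hht).2]
      refine this.trans ?_
      have := le_max_right (C1 + D) (Ba + 3 * |h|)
      linarith
    · have h2t : 2 < t := by linarith
      refine (main t h2t x y).trans ?_
      have := le_max_left (C1 + D) (Ba + 3 * |h|)
      linarith
end

section
/- Let f : M → ℝ be bounded, let a > 0, and let h ∈ ℝ, K > 0 be such that |c_t(x,y) − h t| ≤ K for all t ≥ a and all x, y ∈ M. Then the family of functions {y ↦ S_t f(y) − h t : t ≥ a} is uniformly bounded and uniformly equicontinuous on M. -/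
/-- **Uniform boundedness and equicontinuity of the Lax–Oleinik family** (Lemma `cpctf`):
on a compact metric space `M` with continuous cost `c` satisfying the dynamic programming
identity, if `f` is bounded, `a > 0`, and `|c_t(x,y) − h t| ≤ K` for all `t ≥ a` and all
`x, y`, then the family `{y ↦ S_t f(y) − h t : t ≥ a}`, where
`S_t f (y) = inf_x (c_t(x,y) + f(x))`, is uniformly bounded and uniformly equicontinuous. -/
theorem laxOleinik_family_bounded_equicontinuous
    (M : Type*) [MetricSpace M] [CompactSpace M] [Nonempty M]
    (c : ℝ → M → M → ℝ)
    (hc : ContinuousOn (fun p : ℝ × M × M => c p.1 p.2.1 p.2.2) {p | 0 < p.1})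
    (hdpp : ∀ s t : ℝ, 0 < s → 0 < t → ∀ x y : M,
      c (s + t) x y = ⨅ z : M, (c s x z + c t z y))
    (f : M → ℝ) (hf : ∃ C, ∀ x, |f x| ≤ C)
    (a : ℝ) (ha : 0 < a) (h K : ℝ) (hK : 0 < K)
    (hbound : ∀ t : ℝ, a ≤ t → ∀ x y : M, |c t x y - h * t| ≤ K) :
    (∃ C : ℝ, ∀ t : ℝ, a ≤ t → ∀ y : M,
        |(⨅ x : M, (c t x y + f x)) - h * t| ≤ C) ∧
    (∀ ε > 0, ∃ δ > 0, ∀ t : ℝ, a ≤ t → ∀ y₁ y₂ : M, dist y₁ y₂ < δ →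
        |(⨅ x : M, (c t x y₁ + f x)) - (⨅ x : M, (c t x y₂ + f x))| < ε) := by
  obtain ⟨C, hC⟩ := hf
  -- continuity of c at each fixed positive time
  have hcont : ∀ s : ℝ, 0 < s → Continuous (fun p : M × M => c s p.1 p.2) := by
    intro s hs
    have hmap : Continuous (fun q : M × M => ((s, q) : ℝ × M × M)) :=
      continuous_const.prodMk continuous_id
    exact hc.comp_continuous hmap (fun q => hs)
  -- bddBelow of x ↦ c t x y + f x for t ≥ a
  have hbdd : ∀ t : ℝ, a ≤ t → ∀ y : M, BddBelow (Set.range fun x => c t x y + f x) := by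
    intro t ht y
    refine ⟨h * t - K - C, ?_⟩
    rintro _ ⟨x, rfl⟩
    have h1 := (abs_le.1 (hbound t ht x y)).1
    have h2 := (abs_le.1 (hC x)).1
    dsimp only
    linarith
  constructor
  · refine ⟨K + C, fun t ht y => ?_⟩
    rw [abs_le]
    constructor
    · have hlow : h * t - K - C ≤ ⨅ x, c t x y + f x := by
        refine le_ciInf fun x => ?_
        have h1 := (abs_le.1 (hbound t ht x y)).1
        have h2 := (abs_le.1 (hC x)).1
        linarith
      linarith
    · obtain ⟨x₀⟩ := ‹Nonempty M›
      have h3 : (⨅ x, c t x y + f x) ≤ c t x₀ y + f x₀ := ciInf_le (hbdd t ht y) x₀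
      have h1 := (abs_le.1 (hbound t ht x₀ y)).2
      have h2 := (abs_le.1 (hC x₀)).2
      linarith
  · intro ε hε
    have hu : (0:ℝ) < a / 2 := by linarith
    have hcu : Continuous (fun p : M × M => c (a / 2) p.1 p.2) := hcont _ hu
    have huc := CompactSpace.uniformContinuous_of_continuous hcu
    rw [Metric.uniformContinuous_iff] at huc
    obtain ⟨δ, hδ, hδ'⟩ := huc (ε / 2) (by linarith)
    refine ⟨δ, hδ, fun t ht y₁ y₂ hy => ?_⟩
    have hss : 0 < t - a / 2 := by linarith
    obtain ⟨q₀, -, hq₀⟩ := isCompact_univ.exists_isMinOn Set.univ_nonempty hcu.continuousOn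
    obtain ⟨p₀, -, hp₀⟩ := isCompact_univ.exists_isMinOn Set.univ_nonempty (hcont _ hss).continuousOn
    have key : ∀ w₁ w₂ : M, dist w₁ w₂ < δ →
        (⨅ x, c t x w₁ + f x) ≤ (⨅ x, c t x w₂ + f x) + ε / 2 := by
      intro w₁ w₂ hw
      have hdist : ∀ z : M, c (a / 2) z w₁ ≤ c (a / 2) z w₂ + ε / 2 := by
        intro z
        have hd : dist ((z, w₁) : M × M) (z, w₂) < δ := by
          rw [Prod.dist_eq]
          simp only [dist_self, max_lt_iff]
          exact ⟨hδ, hw⟩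
        have := hδ' hd
        rw [Real.dist_eq, abs_lt] at this
        linarith [this.1, this.2]
      have hct : ∀ x : M, c t x w₁ ≤ c t x w₂ + ε / 2 := by
        intro x
        set s := t - a / 2 with hsdef
        have hts : t = s + a / 2 := by rw [hsdef]; ring
        rw [hts, hdpp s (a / 2) hss hu, hdpp s (a / 2) hss hu]
        have hbz : ∀ w : M, BddBelow (Set.range fun z => c s x z + c (a / 2) z w) := by
          intro w
          refine ⟨c s p₀.1 p₀.2 + c (a / 2) q₀.1 q₀.2, ?_⟩
          rintro _ ⟨z, rfl⟩
          exact add_le_add (hp₀ (Set.mem_univ (x, z))) (hq₀ (Set.mem_univ (z, w)))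
        rw [← sub_le_iff_le_add]
        refine le_ciInf fun z => ?_
        rw [sub_le_iff_le_add]
        calc (⨅ z, c s x z + c (a / 2) z w₁) ≤ c s x z + c (a / 2) z w₁ :=
              ciInf_le (hbz w₁) z
          _ ≤ c s x z + c (a / 2) z w₂ + ε / 2 := by linarith [hdist z]
      rw [← sub_le_iff_le_add]
      refine le_ciInf fun x => ?_
      rw [sub_le_iff_le_add]
      calc (⨅ x, c t x w₁ + f x) ≤ c t x w₁ + f x := ciInf_le (hbdd t ht w₁) x
        _ ≤ c t x w₂ + f x + ε / 2 := by linarith [hct x]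
    have k1 := key y₁ y₂ hy
    have k2 := key y₂ y₁ (by rwa [dist_comm])
    rw [abs_lt]
    constructor <;> [linarith; linarith]
end

section
/- Let h ∈ ℝ and K > 0 be such that |c_t(x,y) − h t| ≤ K for all t ≥ 1 and all x, y ∈ M. If f : M → ℝ is continuous and k ∈ ℝ satisfies S_t f = f + k t (as functions on M) for all t > 0, then k = h. -/
/-- **Uniqueness of the critical constant** (Corollary to Theorem `cpctc`): on a compact
metric space `M` with continuous cost `c` satisfying the dynamic programming identity,
if `|c_t(x,y) − h t| ≤ K` for all `t ≥ 1` and all `x, y`, and `f` is continuous with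
`S_t f = f + k t` for all `t > 0` (where `S_t f (y) = inf_x (c_t(x,y) + f(x))`),
then `k = h`. -/
theorem critical_constant_unique
    (M : Type*) [MetricSpace M] [CompactSpace M] [Nonempty M]
    (c : ℝ → M → M → ℝ)
    (hc : ContinuousOn (fun p : ℝ × M × M => c p.1 p.2.1 p.2.2) {p | 0 < p.1})
    (hdpp : ∀ s t : ℝ, 0 < s → 0 < t → ∀ x y : M,
      c (s + t) x y = ⨅ z : M, (c s x z + c t z y))
    (h K : ℝ) (hK : 0 < K)
    (hbound : ∀ t : ℝ, 1 ≤ t → ∀ x y : M, |c t x y - h * t| ≤ K)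
    (f : M → ℝ) (hf : Continuous f) (k : ℝ)
    (hfix : ∀ t : ℝ, 0 < t → ∀ y : M, (⨅ x : M, (c t x y + f x)) = f y + k * t) :
    k = h := by
  -- f is bounded
  obtain ⟨x₀, -, hx₀⟩ := isCompact_univ.exists_isMaxOn Set.univ_nonempty
    (continuous_abs.comp hf).continuousOn
  set C := |f x₀| with hC
  have hfb : ∀ x : M, |f x| ≤ C := fun x => hx₀ (Set.mem_univ x)
  have hC0 : 0 ≤ C := (abs_nonneg _).trans (hfb x₀)
  -- key estimate: for t ≥ 1, |(k - h) * t| ≤ K + 2 * C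
  have key : ∀ t : ℝ, 1 ≤ t → |(k - h) * t| ≤ K + 2 * C := by
    intro t ht
    have ht0 : (0 : ℝ) < t := lt_of_lt_of_le one_pos ht
    obtain ⟨y⟩ := ‹Nonempty M›
    have hfixy := hfix t ht0 y
    have hlow : ∀ x : M, h * t - K - C ≤ c t x y + f x := by
      intro x
      have h1 := (abs_le.mp (hbound t ht x y)).1
      have h2 := (abs_le.mp (hfb x)).1
      linarith
    have hbdd : BddBelow (Set.range fun x : M => c t x y + f x) :=
      ⟨h * t - K - C, by rintro _ ⟨x, rfl⟩; exact hlow x⟩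
    have hlo : h * t - K - C ≤ f y + k * t := by
      rw [← hfixy]; exact le_ciInf hlow
    have hhi : f y + k * t ≤ h * t + K + C := by
      rw [← hfixy]
      refine (ciInf_le hbdd y).trans ?_
      have h1 := (abs_le.mp (hbound t ht y y)).2
      have h2 := (abs_le.mp (hfb y)).2
      linarith
    have hfy1 := (abs_le.mp (hfb y)).1
    have hfy2 := (abs_le.mp (hfb y)).2
    rw [abs_le]
    constructor <;> nlinarith
  by_contra hne
  have hd : 0 < |k - h| := abs_pos.mpr (sub_ne_zero.mpr hne)
  set T : ℝ := max 1 ((K + 2 * C + 1) / |k - h|) with hT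
  have hT1 : 1 ≤ T := le_max_left _ _
  have := key T hT1
  rw [abs_mul, abs_of_pos (lt_of_lt_of_le one_pos hT1)] at this
  have h2 : (K + 2 * C + 1) / |k - h| ≤ T := le_max_right _ _
  have h3 : K + 2 * C + 1 ≤ |k - h| * T := by
    rw [div_le_iff₀ hd] at h2; linarith
  linarith
end

section
/- Let M be a compact metric space and let c : (0,∞) × M × M → ℝ, written c_t(x,y), be continuous and satisfy the dynamic programming identity c_{s+t}(x,y) = inf_{z ∈ M} [c_s(x,z) + c_t(z,y)] for all s, t > 0 and all x, y ∈ M. Then there exists a unique constant h ∈ ℝ for which there exists a continuous function f : M → ℝ satisfying S_t f = f + h t (as functions on M) for all t > 0. -/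
open Filter Set

section WKAMaux
set_option linter.unusedSectionVars false
variable {M : Type*} [MetricSpace M] [CompactSpace M] [Nonempty M]

lemma wkam_bddBelow {N : Type*} [TopologicalSpace N] [CompactSpace N]
    (g : N → ℝ) (hg : Continuous g) : BddBelow (Set.range g) :=
  (isCompact_range hg).bddBelow

lemma wkam_min {N : Type*} [TopologicalSpace N] [CompactSpace N] [Nonempty N]
    (g : N → ℝ) (hg : Continuous g) : ∃ z, ∀ w, g z ≤ g w := by
  obtain ⟨z, -, hz⟩ := isCompact_univ.exists_isMinOn univ_nonempty hg.continuousOn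
  exact ⟨z, fun w => hz (mem_univ w)⟩

lemma wkam_iInf_eq {N : Type*} [TopologicalSpace N] [CompactSpace N] [Nonempty N]
    (g : N → ℝ) (hg : Continuous g) : ∃ z, (⨅ w, g w) = g z ∧ ∀ w, g z ≤ g w := by
  obtain ⟨z, hz⟩ := wkam_min g hg
  exact ⟨z, le_antisymm (ciInf_le (wkam_bddBelow g hg) z) (le_ciInf hz), hz⟩

variable (c : ℝ → M → M → ℝ)

lemma wkam_slice (hc : ContinuousOn (fun p : ℝ × M × M => c p.1 p.2.1 p.2.2) {p | 0 < p.1})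
    {t : ℝ} (ht : 0 < t) : Continuous fun p : M × M => c t p.1 p.2 := by
  have h : ContinuousOn ((fun p : ℝ × M × M => c p.1 p.2.1 p.2.2) ∘
      (fun p : M × M => ((t, p) : ℝ × M × M))) Set.univ :=
    hc.comp (Continuous.continuousOn (by fun_prop)) (fun p _ => ht)
  exact continuousOn_univ.mp h

lemma wkam_timeslice (hc : ContinuousOn (fun p : ℝ × M × M => c p.1 p.2.1 p.2.2) {p | 0 < p.1})
    (x y : M) : ContinuousOn (fun t => c t x y) {t : ℝ | 0 < t} := by
  have h : ContinuousOn ((fun p : ℝ × M × M => c p.1 p.2.1 p.2.2) ∘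
      (fun t : ℝ => ((t, x, y) : ℝ × M × M))) {t : ℝ | 0 < t} :=
    hc.comp (Continuous.continuousOn (by fun_prop)) (fun t ht => ht)
  exact h

lemma wkam_bound (hc : ContinuousOn (fun p : ℝ × M × M => c p.1 p.2.1 p.2.2) {p | 0 < p.1})
    {l r : ℝ} (hl : 0 < l) :
    ∃ C, 0 ≤ C ∧ ∀ t ∈ Set.Icc l r, ∀ x y : M, |c t x y| ≤ C := by
  have hK : IsCompact ((Set.Icc l r) ×ˢ (Set.univ : Set (M × M))) :=
    isCompact_Icc.prod isCompact_univ
  have hsub : (Set.Icc l r) ×ˢ (Set.univ : Set (M × M)) ⊆ {p : ℝ × M × M | 0 < p.1} :=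
    fun p hp => lt_of_lt_of_le hl hp.1.1
  obtain ⟨C, hC⟩ := hK.exists_bound_of_continuousOn (hc.mono hsub)
  exact ⟨max C 0, le_max_right _ _, fun t ht x y =>
    le_trans (hC (t, x, y) ⟨ht, trivial⟩) (le_max_left _ _)⟩

lemma wkam_pair_cont (hc : ContinuousOn (fun p : ℝ × M × M => c p.1 p.2.1 p.2.2) {p | 0 < p.1})
    {s t : ℝ} (hs : 0 < s) (ht : 0 < t) (x y : M) :
    Continuous fun z => c s x z + c t z y :=
  ((wkam_slice c hc hs).comp (continuous_const.prodMk continuous_id)).add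
    ((wkam_slice c hc ht).comp (continuous_id.prodMk continuous_const))

lemma wkam_dpp_le (hc : ContinuousOn (fun p : ℝ × M × M => c p.1 p.2.1 p.2.2) {p | 0 < p.1})
    (hdpp : ∀ s t : ℝ, 0 < s → 0 < t → ∀ x y : M,
      c (s + t) x y = ⨅ z : M, (c s x z + c t z y))
    {s t : ℝ} (hs : 0 < s) (ht : 0 < t) (x y z : M) :
    c (s + t) x y ≤ c s x z + c t z y := by
  rw [hdpp s t hs ht]
  exact ciInf_le (wkam_bddBelow _ (wkam_pair_cont c hc hs ht x y)) z

lemma wkam_dpp_eq (hc : ContinuousOn (fun p : ℝ × M × M => c p.1 p.2.1 p.2.2) {p | 0 < p.1})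
    (hdpp : ∀ s t : ℝ, 0 < s → 0 < t → ∀ x y : M,
      c (s + t) x y = ⨅ z : M, (c s x z + c t z y))
    {s t : ℝ} (hs : 0 < s) (ht : 0 < t) (x y : M) :
    ∃ z, c (s + t) x y = c s x z + c t z y ∧ ∀ w, c s x z + c t z y ≤ c s x w + c t w y := by
  obtain ⟨z, hz1, hz2⟩ := wkam_iInf_eq _ (wkam_pair_cont c hc hs ht x y)
  exact ⟨z, by rw [hdpp s t hs ht]; exact hz1, hz2⟩

end WKAMaux

section WKAMaux2
set_option linter.unusedSectionVars false
set_option maxHeartbeats 1000000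
variable {M : Type*} [MetricSpace M] [CompactSpace M] [Nonempty M]

lemma wkam_decomp (x : ℝ) (hx : 1 ≤ x) :
    ∃ (k : ℕ) (r : ℝ), 1 ≤ r ∧ r < 2 ∧ x = r + k := by
  have hx0 : (0:ℝ) ≤ x := by linarith
  have h1 : 1 ≤ ⌊x⌋₊ := by
    rw [Nat.le_floor_iff hx0]; exact_mod_cast hx
  refine ⟨⌊x⌋₊ - 1, x - (⌊x⌋₊ - 1 : ℕ), ?_, ?_, by ring⟩
  · have hcast : ((⌊x⌋₊ - 1 : ℕ) : ℝ) = (⌊x⌋₊ : ℝ) - 1 := by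
      push_cast [Nat.cast_sub h1]; ring
    have := Nat.floor_le hx0
    rw [hcast]; linarith
  · have hcast : ((⌊x⌋₊ - 1 : ℕ) : ℝ) = (⌊x⌋₊ : ℝ) - 1 := by
      push_cast [Nat.cast_sub h1]; ring
    have := Nat.lt_floor_add_one x
    rw [hcast]; linarith

lemma wkam_decomp_scaled {t : ℝ} (ht : 0 < t) (x : ℝ) (hx : t ≤ x) :
    ∃ (k : ℕ) (r : ℝ), t ≤ r ∧ r < 2 * t ∧ x = r + k * t := by
  obtain ⟨k, r0, h1, h2, h3⟩ := wkam_decomp (x / t) ((one_le_div ht).mpr hx)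
  refine ⟨k, r0 * t, ?_, ?_, ?_⟩
  · nlinarith
  · nlinarith
  · have : x = (r0 + k) * t := by
      field_simp at h3 ⊢; linarith [h3]
    rw [this]; ring
lemma wkam_h (c : ℝ → M → M → ℝ)
    (hc : ContinuousOn (fun p : ℝ × M × M => c p.1 p.2.1 p.2.2) {p | 0 < p.1})
    (hdpp : ∀ s t : ℝ, 0 < s → 0 < t → ∀ x y : M,
      c (s + t) x y = ⨅ z : M, (c s x z + c t z y)) (x0 : M) :
    ∃ h K : ℝ, 0 ≤ K ∧ ∀ t, 4 ≤ t → ∀ y, |c t x0 y - h * t| ≤ K := by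
  classical
  set a : ℝ → ℝ := fun t => c t x0 x0 with ha
  set b : ℝ → ℝ := fun t => ⨅ p : M × M, c t p.1 p.2 with hb
  obtain ⟨C, hC0, hC⟩ := wkam_bound c hc (l := 1) (r := 2) one_pos
  have hC1 : ∀ x y : M, |c 1 x y| ≤ C := fun x y => hC 1 ⟨le_refl 1, one_le_two⟩ x y
  have hb_le : ∀ {t : ℝ}, 0 < t → ∀ x y, b t ≤ c t x y := by
    intro t ht x y
    exact ciInf_le (wkam_bddBelow _ (wkam_slice c hc ht)) (x, y)
  have hb_ge : ∀ {t : ℝ} (m : ℝ), (∀ x y, m ≤ c t x y) → m ≤ b t :=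
    fun m hm => le_ciInf (fun p => hm p.1 p.2)
  have hba : ∀ {t : ℝ}, 0 < t → b t ≤ a t := fun ht => hb_le ht x0 x0
  have hsub : ∀ {s t : ℝ}, 0 < s → 0 < t → a (s + t) ≤ a s + a t :=
    fun hs ht => wkam_dpp_le c hc hdpp hs ht x0 x0 x0
  have hsup : ∀ {s t : ℝ}, 0 < s → 0 < t → b s + b t ≤ b (s + t) := by
    intro s t hs ht
    refine hb_ge _ (fun x y => ?_)
    rw [hdpp s t hs ht]
    have hcont := wkam_pair_cont c hc hs ht x y
    refine le_ciInf fun z => add_le_add (hb_le hs x z) (hb_le ht z y)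
  have hsupk : ∀ (k : ℕ) {s t : ℝ}, 0 < s → 0 < t → b s + k * b t ≤ b (s + k * t) := by
    intro k
    induction k with
    | zero => intro s t hs ht; simp
    | succ n ih =>
      intro s t hs ht
      have hpos : 0 < s + n * t := by
        have : (0:ℝ) ≤ (n:ℝ) := n.cast_nonneg
        nlinarith
      have h1 : b (s + n * t) + b t ≤ b (s + n * t + t) := hsup hpos ht
      have h2 := ih hs ht
      have heq : s + ((n:ℝ) + 1) * t = s + n * t + t := by ring
      push_cast
      rw [heq]
      linarith
  have hsubk : ∀ (k : ℕ) {s t : ℝ}, 0 < s → 0 < t → a (s + k * t) ≤ a s + k * a t := by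
    intro k
    induction k with
    | zero => intro s t hs ht; simp
    | succ n ih =>
      intro s t hs ht
      have hpos : 0 < s + n * t := by
        have : (0:ℝ) ≤ (n:ℝ) := n.cast_nonneg
        nlinarith
      have h1 : a (s + n * t + t) ≤ a (s + n * t) + a t := hsub hpos ht
      have h2 := ih hs ht
      have heq : s + ((n:ℝ) + 1) * t = s + n * t + t := by ring
      push_cast
      rw [heq]
      linarith
  have hbl : ∀ x, 1 ≤ x → -(C * x) ≤ b x := by
    intro x hx
    obtain ⟨k, r, hr1, hr2, hxe⟩ := wkam_decomp x hx
    have hrpos : (0:ℝ) < r := by linarith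
    have h1 : b r + k * b 1 ≤ b (r + k * 1) := hsupk k hrpos one_pos
    have hbr : -C ≤ b r :=
      hb_ge _ (fun x y => (abs_le.mp (hC r ⟨hr1, le_of_lt hr2⟩ x y)).1)
    have hb1 : -C ≤ b 1 :=
      hb_ge _ (fun x y => (abs_le.mp (hC1 x y)).1)
    have hk : (k:ℝ) ≤ x - 1 := by
      rw [hxe]; linarith
    have hk0 : (0:ℝ) ≤ (k:ℝ) := k.cast_nonneg
    have hxe' : x = r + k * 1 := by rw [hxe]; ring
    rw [hxe']
    have h2 : (k:ℝ) * (-C) ≤ (k:ℝ) * b 1 := by nlinarith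
    nlinarith
  set S : Set ℝ := (fun t => a t / t) '' Set.Ici 1 with hS
  have hSne : S.Nonempty := ⟨a 1 / 1, 1, Set.self_mem_Ici, rfl⟩
  have hSbdd : ∀ z ∈ S, -C ≤ z := by
    rintro z ⟨t, ht, rfl⟩
    have ht' : (1:ℝ) ≤ t := ht
    have ht0 : (0:ℝ) < t := by linarith
    have h1 : -(C * t) ≤ b t := hbl t ht'
    have h2 : b t ≤ a t := hba ht0
    rw [le_div_iff₀ ht0]
    nlinarith
  have hBB : BddBelow S := ⟨-C, hSbdd⟩
  set h : ℝ := sInf S with hh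
  have hht : ∀ t, 1 ≤ t → h * t ≤ a t := by
    intro t ht
    have ht0 : (0:ℝ) < t := by linarith
    have h1 : h ≤ a t / t := csInf_le hBB ⟨t, ht, rfl⟩
    calc h * t ≤ (a t / t) * t := by nlinarith
      _ = a t := by field_simp
  have hab : ∀ x, 3 ≤ x → a x ≤ b (x - 2) + 2 * C := by
    intro x hx
    have h2 : (0:ℝ) < x - 2 := by linarith
    obtain ⟨p, hp1, -⟩ := wkam_iInf_eq (fun p : M × M => c (x - 2) p.1 p.2) (wkam_slice c hc h2)
    have s1 : c (1 + (x - 1)) x0 x0 ≤ c 1 x0 p.1 + c (x - 1) p.1 x0 :=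
      wkam_dpp_le c hc hdpp one_pos (by linarith) x0 x0 p.1
    have e1 : (1:ℝ) + (x - 1) = x := by ring
    rw [e1] at s1
    have s2 : c ((x - 2) + 1) p.1 x0 ≤ c (x - 2) p.1 p.2 + c 1 p.2 x0 :=
      wkam_dpp_le c hc hdpp h2 one_pos p.1 x0 p.2
    have e2 : (x - 2) + 1 = x - 1 := by ring
    rw [e2] at s2
    have b1 := (abs_le.mp (hC1 x0 p.1)).2
    have b2 := (abs_le.mp (hC1 p.2 x0)).2
    have hbv : b (x - 2) = c (x - 2) p.1 p.2 := hp1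
    show a x ≤ b (x-2) + 2 * C
    rw [hbv]
    calc a x ≤ c 1 x0 p.1 + c (x - 1) p.1 x0 := s1
      _ ≤ c 1 x0 p.1 + (c (x - 2) p.1 p.2 + c 1 p.2 x0) := by linarith
      _ ≤ c (x - 2) p.1 p.2 + 2 * C := by linarith
  have hbh : ∀ τ, 1 ≤ τ → b τ ≤ h * τ := by
    intro τ hτ
    have hτ0 : (0:ℝ) < τ := by linarith
    have key : ∀ t, 1 ≤ t → b τ / τ ≤ a t / t := by
      intro t ht
      have ht0 : (0:ℝ) < t := by linarith
      obtain ⟨Ct, hCt0, hCt⟩ := wkam_bound c hc (l := t) (r := 2 * t) ht0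
      set D := Ct + 2 * |a t| with hD
      have hD0 : 0 ≤ D := by positivity
      have main : ∀ n : ℕ, t ≤ (n:ℝ) → (n:ℝ) * b τ ≤ ((n:ℝ) * τ / t) * a t + D := by
        intro n hn
        have hn1R : (1:ℝ) ≤ (n:ℝ) := le_trans ht hn
        have hn1 : 1 ≤ n := by exact_mod_cast hn1R
        have hnτ : t ≤ (n:ℝ) * τ := by nlinarith
        obtain ⟨k, r, hr1, hr2, hre⟩ := wkam_decomp_scaled ht0 ((n:ℝ) * τ) hnτ
        have h1 : b τ + ((n - 1:ℕ):ℝ) * b τ ≤ b (τ + ((n - 1:ℕ):ℝ) * τ) := hsupk (n - 1) hτ0 hτ0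
        have hcast : ((n - 1:ℕ):ℝ) = (n:ℝ) - 1 := by
          push_cast [Nat.cast_sub hn1]; ring
        rw [hcast] at h1
        have e1 : τ + ((n:ℝ) - 1) * τ = (n:ℝ) * τ := by ring
        rw [e1] at h1
        have hnτ0 : (0:ℝ) < (n:ℝ) * τ := by nlinarith
        have h2 : b ((n:ℝ) * τ) ≤ a ((n:ℝ) * τ) := hba hnτ0
        have hrpos : (0:ℝ) < r := lt_of_lt_of_le ht0 hr1
        have h3 : a ((n:ℝ) * τ) ≤ a r + (k:ℝ) * a t := by
          rw [hre]; exact hsubk k hrpos ht0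
        have h4 : a r ≤ Ct := (abs_le.mp (hCt r ⟨hr1, le_of_lt hr2⟩ x0 x0)).2
        have hk3 : (k:ℝ) ≤ (n:ℝ) * τ / t := by
          rw [le_div_iff₀ ht0]; nlinarith
        have hk4 : (n:ℝ) * τ / t - 2 ≤ (k:ℝ) := by
          rw [sub_le_iff_le_add, div_le_iff₀ ht0]; nlinarith
        have h5 : (k:ℝ) * a t ≤ ((n:ℝ) * τ / t) * a t + 2 * |a t| := by
          rcases abs_cases (a t) with ⟨he, hs⟩ | ⟨he, hs⟩ <;> nlinarith
        have hns : (n:ℝ) * b τ = b τ + ((n:ℝ) - 1) * b τ := by ring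
        rw [hns]
        calc b τ + ((n:ℝ) - 1) * b τ ≤ b ((n:ℝ) * τ) := h1
          _ ≤ a ((n:ℝ) * τ) := h2
          _ ≤ a r + (k:ℝ) * a t := h3
          _ ≤ Ct + ((n:ℝ) * τ / t * a t + 2 * |a t|) := by linarith
          _ = (n:ℝ) * τ / t * a t + D := by rw [hD]; ring
      have lim : b τ ≤ (τ / t) * a t := by
        refine le_of_forall_pos_le_add fun ε hε => ?_
        obtain ⟨n, hn⟩ := exists_nat_gt (max (D / ε) t)
        have hn1 : t ≤ (n:ℝ) := le_of_lt (lt_of_le_of_lt (le_max_right _ _) hn)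
        have hnpos : (0:ℝ) < (n:ℝ) := lt_of_lt_of_le ht0 hn1
        have hmain := main n hn1
        have heq : ((n:ℝ) * τ / t) * a t = (n:ℝ) * ((τ / t) * a t) := by ring
        rw [heq] at hmain
        have hstep : b τ ≤ (τ / t) * a t + D / n := by
          have hfd : (n:ℝ) * (D / n) = D := by field_simp
          nlinarith
        have hDn : D / n ≤ ε := by
          rw [div_le_iff₀ hnpos]
          have h6 : D / ε < (n:ℝ) := lt_of_le_of_lt (le_max_left _ _) hn
          rw [div_lt_iff₀ hε] at h6
          linarith
        linarith
      rw [div_le_div_iff₀ hτ0 ht0]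
      have lim2 : b τ * t ≤ (τ / t * a t) * t := mul_le_mul_of_nonneg_right lim ht0.le
      have e : (τ / t * a t) * t = a t * τ := by field_simp
      rw [e] at lim2; exact lim2
    have hfin : b τ / τ ≤ h := le_csInf hSne (by rintro z ⟨t, ht, rfl⟩; exact key t ht)
    calc b τ = (b τ / τ) * τ := by field_simp
      _ ≤ h * τ := by nlinarith
  refine ⟨h, 3 * |h| + 3 * C, by positivity, fun t ht y => ?_⟩
  have ht0 : (0:ℝ) < t := by linarith
  have u1 : c t x0 y ≤ a (t - 1) + C := by
    have hd := wkam_dpp_le c hc hdpp (show (0:ℝ) < t - 1 by linarith) one_pos x0 y x0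
    have e : t - 1 + 1 = t := by ring
    rw [e] at hd
    have hb1 := (abs_le.mp (hC1 x0 y)).2
    linarith
  have u2 : a (t - 1) ≤ b (t - 1 - 2) + 2 * C := hab (t - 1) (by linarith)
  have e2 : t - 1 - 2 = t - 3 := by ring
  rw [e2] at u2
  have u3 : b (t - 3) ≤ h * (t - 3) := hbh (t - 3) (by linarith)
  have l1 : a (t + 1) ≤ c t x0 y + C := by
    have hd := wkam_dpp_le c hc hdpp ht0 one_pos x0 x0 y
    have hb1 := (abs_le.mp (hC1 y x0)).2
    linarith
  have l2 : h * (t + 1) ≤ a (t + 1) := hht (t + 1) (by linarith)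
  have habs1 : h ≤ |h| := le_abs_self h
  have habs2 : -|h| ≤ h := neg_abs_le h
  rw [abs_le]
  constructor
  · nlinarith
  · nlinarith
lemma wkam_equicont (c : ℝ → M → M → ℝ)
    (hc : ContinuousOn (fun p : ℝ × M × M => c p.1 p.2.1 p.2.2) {p | 0 < p.1})
    (hdpp : ∀ s t : ℝ, 0 < s → 0 < t → ∀ x y : M,
      c (s + t) x y = ⨅ z : M, (c s x z + c t z y)) (x0 : M) {ε : ℝ} (hε : 0 < ε) :
    ∃ δ > 0, ∀ τ : ℝ, 2 ≤ τ → ∀ z z' : M, dist z z' < δ → c τ x0 z ≤ c τ x0 z' + ε := by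
  have hc1 : Continuous fun p : M × M => c 1 p.1 p.2 := wkam_slice c hc one_pos
  have huc := CompactSpace.uniformContinuous_of_continuous hc1
  rw [Metric.uniformContinuous_iff] at huc
  obtain ⟨δ, hδ, hδ'⟩ := huc ε hε
  refine ⟨δ, hδ, fun τ hτ z z' hzz => ?_⟩
  have h1 : (0:ℝ) < τ - 1 := by linarith
  have e : τ - 1 + 1 = τ := by ring
  have hA := hdpp (τ - 1) 1 h1 one_pos x0 z
  have hB := hdpp (τ - 1) 1 h1 one_pos x0 z'
  rw [e] at hA hB
  rw [hA, hB]
  have hptw : ∀ w : M, c 1 w z < c 1 w z' + ε := by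
    intro w
    have hde : dist ((w, z) : M × M) (w, z') = dist z z' := by
      simp [Prod.dist_eq, dist_nonneg]
    have hd : dist ((w, z) : M × M) (w, z') < δ := by rw [hde]; exact hzz
    have h2 := hδ' hd
    rw [Real.dist_eq] at h2
    linarith [(abs_lt.mp h2).2]
  have hstep : (⨅ w, c (τ - 1) x0 w + c 1 w z) - ε ≤ ⨅ w, c (τ - 1) x0 w + c 1 w z' := by
    refine le_ciInf fun w => ?_
    have h0 : (⨅ w, c (τ - 1) x0 w + c 1 w z) ≤ c (τ - 1) x0 w + c 1 w z :=
      ciInf_le (wkam_bddBelow _ (wkam_pair_cont c hc h1 one_pos x0 z)) w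
    linarith [hptw w]
  linarith
end WKAMaux2

open Filter in
/-- **Weak KAM theorem, Lax–Oleinik fixed point form** (Theorem `wKAMcts`): on a compact
metric space `M` with continuous cost `c` satisfying the dynamic programming identity,
there exists a unique constant `h` for which some continuous function `f : M → ℝ`
satisfies `S_t f = f + h t` for all `t > 0`, where `S_t f (y) = inf_x (c_t(x,y) + f(x))`. -/
theorem weak_KAM_fixed_point
    (M : Type*) [MetricSpace M] [CompactSpace M] [Nonempty M]
    (c : ℝ → M → M → ℝ)
    (hc : ContinuousOn (fun p : ℝ × M × M => c p.1 p.2.1 p.2.2) {p | 0 < p.1})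
    (hdpp : ∀ s t : ℝ, 0 < s → 0 < t → ∀ x y : M,
      c (s + t) x y = ⨅ z : M, (c s x z + c t z y)) :
    ∃! h : ℝ, ∃ f : M → ℝ, Continuous f ∧
      ∀ t : ℝ, 0 < t → ∀ y : M, (⨅ x : M, (c t x y + f x)) = f y + h * t := by
  classical
  obtain ⟨x0⟩ := (inferInstance : Nonempty M)
  obtain ⟨h, K, hK0, hGB⟩ := wkam_h c hc hdpp x0
  set g : ℝ → M → ℝ := fun t y => c t x0 y - h * t with hgdef
  set u : M → ℝ := fun y => Filter.liminf (fun t => g t y) Filter.atTop with hudef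
  have hurfl : ∀ y, Filter.liminf (fun t => g t y) Filter.atTop = u y := fun y => rfl
  have hev : ∀ y, ∀ᶠ t in (atTop : Filter ℝ), |g t y| ≤ K := by
    intro y
    filter_upwards [eventually_ge_atTop 4] with t ht
    exact hGB t ht y
  have hBdd : ∀ y, IsBoundedUnder (· ≥ ·) (atTop : Filter ℝ) (fun t => g t y) := fun y =>
    isBoundedUnder_of_eventually_ge (a := -K) ((hev y).mono fun t ht => (abs_le.mp ht).1)
  have hCob : ∀ y, IsCoboundedUnder (· ≥ ·) (atTop : Filter ℝ) (fun t => g t y) := fun y =>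
    IsCoboundedUnder.of_frequently_le (a := K)
      ((hev y).frequently.mono fun t ht => (abs_le.mp ht).2)
  have hub : ∀ y, u y ≤ K := by
    intro y
    rw [← hurfl y]
    exact liminf_le_of_frequently_le
      ((hev y).frequently.mono fun t ht => (abs_le.mp ht).2) (hBdd y)
  have hlb : ∀ y, -K ≤ u y := by
    intro y
    rw [← hurfl y]
    exact le_liminf_of_le (hCob y) ((hev y).mono fun t ht => (abs_le.mp ht).1)
  have hfreq : ∀ (y : M) (ε : ℝ), 0 < ε → ∀ N : ℝ, ∃ t, N ≤ t ∧ g t y < u y + ε := by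
    intro y ε hε N
    have h1 : Filter.liminf (fun t => g t y) Filter.atTop < u y + ε := by
      rw [hurfl y]; linarith
    have h2 := frequently_lt_of_liminf_lt (hCob y) h1
    rw [frequently_atTop] at h2
    obtain ⟨t, ht1, ht2⟩ := h2 N
    exact ⟨t, ht1, ht2⟩
  have hevl : ∀ (y : M) (ε : ℝ), 0 < ε → ∀ᶠ t in (atTop : Filter ℝ), u y - ε < g t y := by
    intro y ε hε
    have hlt : u y - ε < Filter.liminf (fun t => g t y) Filter.atTop := by
      rw [hurfl y]; linarith
    exact eventually_lt_of_lt_liminf hlt (hBdd y)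
  -- inequality (i)
  have hineq1 : ∀ s : ℝ, 0 < s → ∀ z y : M, u y + h * s ≤ c s z y + u z := by
    intro s hs z y
    have key : ∀ ε : ℝ, 0 < ε → u y ≤ (u z + c s z y - h * s) + ε := by
      intro ε hε
      rw [← hurfl y]
      refine liminf_le_of_frequently_le ?_ (hBdd y)
      rw [frequently_atTop]
      intro N
      obtain ⟨t, ht1, ht2⟩ := hfreq z ε hε (max N 1)
      have htpos : (0:ℝ) < t := lt_of_lt_of_le one_pos (le_trans (le_max_right N 1) ht1)
      have htN : N ≤ t := le_trans (le_max_left N 1) ht1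
      refine ⟨t + s, by linarith, ?_⟩
      have hd := wkam_dpp_le c hc hdpp htpos hs x0 y z
      simp only [hgdef] at ht2 ⊢
      linarith
    have h2 := le_of_forall_pos_le_add key
    linarith
  -- uniform continuity of u
  have hucont : ∀ ε : ℝ, 0 < ε → ∃ δ > 0, ∀ z z' : M, dist z z' < δ → u z ≤ u z' + ε := by
    intro ε hε
    have hε2 : 0 < ε / 2 := by linarith
    obtain ⟨δ, hδ, hδ'⟩ := wkam_equicont c hc hdpp x0 hε2
    refine ⟨δ, hδ, fun z z' hzz => ?_⟩
    have key : ∀ ε' : ℝ, 0 < ε' → u z ≤ (u z' + ε / 2) + ε' := by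
      intro ε' hε'
      rw [← hurfl z]
      refine liminf_le_of_frequently_le ?_ (hBdd z)
      rw [frequently_atTop]
      intro N
      obtain ⟨t, ht1, ht2⟩ := hfreq z' ε' hε' (max N 2)
      have ht2' : (2:ℝ) ≤ t := le_trans (le_max_right N 2) ht1
      refine ⟨t, le_trans (le_max_left N 2) ht1, ?_⟩
      have heq := hδ' t ht2' z z' hzz
      simp only [hgdef] at ht2 ⊢
      linarith
    linarith [le_of_forall_pos_le_add key]
  have hcont : Continuous u := by
    rw [Metric.continuous_iff]
    intro x ε hε
    obtain ⟨δ, hδ, hδ'⟩ := hucont (ε / 2) (by linarith)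
    refine ⟨δ, hδ, fun y hyx => ?_⟩
    have h1 := hδ' y x hyx
    have h2 := hδ' x y (by rwa [dist_comm])
    rw [Real.dist_eq, abs_lt]
    constructor <;> linarith
  -- inequality (ii)
  have hineq2 : ∀ s : ℝ, 0 < s → ∀ y : M, ∃ z, c s z y + u z ≤ u y + h * s := by
    intro s hs y
    have hTex : ∀ n : ℕ, ∃ t, (n:ℝ) + s + 4 ≤ t ∧ g t y < u y + 1 / (n + 1) :=
      fun n => hfreq y (1 / (n + 1)) (by positivity) _
    choose T hT1 hT2 using hTex
    have hTs : ∀ n, 0 < T n - s := by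
      intro n
      have h1 := hT1 n
      have h2 : (0:ℝ) ≤ (n:ℝ) := n.cast_nonneg
      linarith
    have hTs2 : ∀ n, (2:ℝ) ≤ T n - s := by
      intro n
      have h1 := hT1 n
      have h2 : (0:ℝ) ≤ (n:ℝ) := n.cast_nonneg
      linarith
    have hZex : ∀ n : ℕ, ∃ z, c (T n) x0 y = c (T n - s) x0 z + c s z y := by
      intro n
      obtain ⟨z, hz, -⟩ := wkam_dpp_eq c hc hdpp (hTs n) hs x0 y
      refine ⟨z, ?_⟩
      have e : T n - s + s = T n := by ring
      rw [e] at hz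
      exact hz
    choose Z hZ using hZex
    obtain ⟨zs, φ, hφ, hZt⟩ := CompactSpace.tendsto_subseq Z
    refine ⟨zs, le_of_forall_pos_le_add fun ε hε => ?_⟩
    have hε4 : 0 < ε / 4 := by linarith
    obtain ⟨δ, hδ, hδ'⟩ := wkam_equicont c hc hdpp x0 hε4
    have ev1 : ∀ᶠ j in (atTop : Filter ℕ), dist (Z (φ j)) zs < δ :=
      Metric.tendsto_nhds.mp hZt δ hδ
    have hcs : Continuous fun z => c s z y :=
      (wkam_slice c hc hs).comp (continuous_id.prodMk continuous_const)
    have ev2 : ∀ᶠ j in (atTop : Filter ℕ), |c s (Z (φ j)) y - c s zs y| < ε / 4 := by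
      have h3 : Tendsto (fun j => c s (Z (φ j)) y) atTop (nhds (c s zs y)) :=
        (hcs.tendsto zs).comp hZt
      have h4 := Metric.tendsto_nhds.mp h3 (ε / 4) hε4
      filter_upwards [h4] with j hj
      rwa [Real.dist_eq] at hj
    have hTtend : Tendsto (fun j => T (φ j) - s) atTop atTop := by
      refine tendsto_atTop_mono (fun j => ?_)
        (tendsto_atTop_add_const_right atTop 4 tendsto_natCast_atTop_atTop)
      have h1 := hT1 (φ j)
      have h2 : (j:ℝ) ≤ (φ j : ℝ) := by exact_mod_cast hφ.le_apply
      linarith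
    have ev3 : ∀ᶠ j in (atTop : Filter ℕ), u zs - ε / 4 < g (T (φ j) - s) zs :=
      hTtend.eventually (hevl zs (ε / 4) hε4)
    have ev4 : ∀ᶠ j in (atTop : Filter ℕ), (1:ℝ) / (φ j + 1) < ε / 4 := by
      obtain ⟨N, hN⟩ := exists_nat_gt (4 / ε)
      filter_upwards [eventually_ge_atTop N] with j hj
      have hφj : N ≤ φ j := le_trans hj hφ.le_apply
      have h5 : (N:ℝ) ≤ (φ j : ℝ) := by exact_mod_cast hφj
      rw [div_lt_iff₀ (by positivity)]
      rw [div_lt_iff₀ hε] at hN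
      nlinarith
    obtain ⟨j, h1, h2, h3, h4⟩ := (ev1.and (ev2.and (ev3.and ev4))).exists
    have hzeq := hZ (φ j)
    have hequi : c (T (φ j) - s) x0 zs ≤ c (T (φ j) - s) x0 (Z (φ j)) + ε / 4 :=
      hδ' (T (φ j) - s) (hTs2 (φ j)) zs (Z (φ j)) (by rwa [dist_comm])
    have hg5 := hT2 (φ j)
    simp only [hgdef] at hg5 h3
    have habs := (abs_lt.mp h2).1
    have hexp : h * (T (φ j) - s) = h * T (φ j) - h * s := by ring
    linarith
  -- bddBelow helper
  have hbddrange : ∀ t : ℝ, 0 < t → ∀ (y : M) (f : M → ℝ) (B : ℝ), (∀ x, -B ≤ f x) →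
      BddBelow (Set.range fun x => c t x y + f x) := by
    intro t ht y f B hB
    obtain ⟨Ct, hCt0, hCt⟩ := wkam_bound c hc (l := t) (r := t) ht
    refine ⟨-Ct - B, ?_⟩
    rintro v ⟨x, rfl⟩
    have h1 := (abs_le.mp (hCt t ⟨le_refl t, le_refl t⟩ x y)).1
    have h2 := hB x
    have : -Ct - B ≤ c t x y + f x := by linarith
    exact this
  -- the fixed point equation
  have hfix : ∀ t : ℝ, 0 < t → ∀ y : M, (⨅ x : M, (c t x y + u x)) = u y + h * t := by
    intro t ht y
    refine le_antisymm ?_ (le_ciInf fun z => by linarith [hineq1 t ht z y])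
    obtain ⟨z, hz⟩ := hineq2 t ht y
    exact le_trans (ciInf_le (hbddrange t ht y u K hlb) z) hz
  refine ⟨h, ⟨u, hcont, hfix⟩, ?_⟩
  rintro h' ⟨f, hfc, hff⟩
  obtain ⟨Cf, hCf⟩ := isCompact_univ.exists_bound_of_continuousOn hfc.continuousOn
  have hCf' : ∀ x, |f x| ≤ Cf := by
    intro x
    have := hCf x (Set.mem_univ x)
    rwa [Real.norm_eq_abs] at this
  have hCf0 : 0 ≤ Cf := le_trans (abs_nonneg _) (hCf' x0)
  set D := Cf + K with hDdef
  have hD : ∀ x, |f x - u x| ≤ D := by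
    intro x
    rw [abs_le]
    have h1 := (abs_le.mp (hCf' x)).1
    have h2 := (abs_le.mp (hCf' x)).2
    have h3 := hlb x
    have h4 := hub x
    constructor <;> linarith [hDdef]
  have key : ∀ t : ℝ, 0 < t → |h' - h| * t ≤ 2 * D := by
    intro t ht
    have e1 := hff t ht x0
    have e2 := hfix t ht x0
    have hbf : BddBelow (Set.range fun x => c t x x0 + f x) :=
      hbddrange t ht x0 f Cf (fun x => (abs_le.mp (hCf' x)).1)
    have hbu := hbddrange t ht x0 u K hlb
    have d1 : (⨅ x : M, (c t x x0 + f x)) ≤ (⨅ x : M, (c t x x0 + u x)) + D := by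
      rw [← sub_le_iff_le_add]
      refine le_ciInf fun x => ?_
      have hle := ciInf_le hbf x
      have habs := (abs_le.mp (hD x)).2
      linarith
    have d2 : (⨅ x : M, (c t x x0 + u x)) ≤ (⨅ x : M, (c t x x0 + f x)) + D := by
      rw [← sub_le_iff_le_add]
      refine le_ciInf fun x => ?_
      have hle := ciInf_le hbu x
      have habs := (abs_le.mp (hD x)).1
      linarith
    rw [e1, e2] at d1 d2
    have habs0_1 := (abs_le.mp (hD x0)).1
    have habs0_2 := (abs_le.mp (hD x0)).2
    rcases abs_cases (h' - h) with ⟨he, -⟩ | ⟨he, -⟩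
    · rw [he]
      have hexp : (h' - h) * t = h' * t - h * t := by ring
      linarith
    · rw [he]
      have hexp : -(h' - h) * t = h * t - h' * t := by ring
      linarith
  have hD0 : 0 ≤ D := le_trans (abs_nonneg _) (hD x0)
  by_contra hne
  have habsp : 0 < |h' - h| := abs_pos.mpr (sub_ne_zero.mpr hne)
  have ht0 : 0 < (2 * D + 1) / |h' - h| := by positivity
  have hkey := key _ ht0
  have hcanc : |h' - h| * ((2 * D + 1) / |h' - h|) = 2 * D + 1 := by
    field_simp
  rw [hcanc] at hkey
  linarith
end

section
/- Let M be a compact metric space and let c : M × M → ℝ be continuous. For Borel probability measures μ, ν on M set C(μ,ν) = inf_Π ∫_{M×M} c(x,y) dΠ(x,y), the infimum over all Borel probability measures Π on M × M whose marginal under the first projection is μ and under the second projection is ν. Then there exists a Borel probability measure μ on M achieving inf_ν C(ν,ν), the infimum over all Borel probability measures ν on M. -/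
open MeasureTheory

/-- A coupling of two Borel probability measures: a probability measure on `M × M`
whose first marginal is `μ` and second marginal is `ν`. -/
def IsCoupling {M : Type*} [MeasurableSpace M]
    (P : Measure (M × M)) (μ ν : Measure M) : Prop :=
  P.map Prod.fst = μ ∧ P.map Prod.snd = ν

/-- The Monge–Kantorovich optimal transportation cost `C(μ,ν)`:
the infimum of `∫ c dΠ` over all couplings `Π` of `μ` and `ν`. -/
noncomputable def transportCost {M : Type*} [MeasurableSpace M]
    (c : M → M → ℝ) (μ ν : Measure M) : ℝ :=
  sInf {r : ℝ | ∃ P : Measure (M × M), IsProbabilityMeasure P ∧ IsCoupling P μ ν ∧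
    r = ∫ p, c p.1 p.2 ∂P}

/-!
The symmetric couplings (`P.map Prod.fst = P.map Prod.snd`) are cut out of the probability
measures on `M × M` by the linear constraints `∫ f(x) dP = ∫ f(y) dP`. By the Riesz–Markov–Kakutani
theorem, the probability measures on a compact space are the normalized positive linear functionals
on `C(X, ℝ)`, and these form a compact set for pointwise convergence by Tychonoff, since
`|L f| ≤ ‖f‖`. The constraints and `L ↦ L c` are continuous there, so `∫ c dP` attains its minimum
`P` over the symmetric couplings; its marginal `μ` then satisfies
`C(μ, μ) ≤ ∫ c dP ≤ C(ν, ν)` for every `ν`, as every coupling of `ν` with itself is symmetric.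
-/

open Set
open scoped CompactlySupported BoundedContinuousFunction

section State

variable {X : Type*} [TopologicalSpace X]

/-- A state (normalized positive linear functional) on `C(X, ℝ)`, kept as a plain function so that
the states carry the topology of pointwise convergence. -/
structure IsState (L : C(X, ℝ) → ℝ) : Prop where
  map_add (f g : C(X, ℝ)) : L (f + g) = L f + L g
  map_smul (a : ℝ) (f : C(X, ℝ)) : L (a • f) = a * L f
  monotone : Monotone L
  map_one : L 1 = 1

theorem isClosed_setOf_isState : IsClosed {L : C(X, ℝ) → ℝ | IsState L} := by
  have h : {L : C(X, ℝ) → ℝ | IsState L} =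
      (⋂ f, ⋂ g, {L | L (f + g) = L f + L g}) ∩ (⋂ (a : ℝ), ⋂ f, {L | L (a • f) = a * L f}) ∩
        (⋂ f, ⋂ g, ⋂ (_ : f ≤ g), {L | L f ≤ L g}) ∩ {L | L 1 = 1} := by
    ext L
    simp only [mem_ofPred_eq, mem_inter_iff, mem_iInter]
    exact ⟨fun hL => ⟨⟨⟨hL.map_add, hL.map_smul⟩, fun f g => @hL.monotone f g⟩, hL.map_one⟩,
      fun ⟨⟨⟨hadd, hsmul⟩, hmono⟩, hone⟩ => ⟨hadd, hsmul, fun _ _ => hmono _ _, hone⟩⟩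
  rw [h]
  refine ((isClosed_iInter fun f => isClosed_iInter fun g => isClosed_eq ?_ ?_).inter
    (isClosed_iInter fun a => isClosed_iInter fun f => isClosed_eq ?_ ?_)).inter
    (isClosed_iInter fun f => isClosed_iInter fun g => isClosed_iInter fun _ =>
      isClosed_le ?_ ?_) |>.inter (isClosed_eq ?_ ?_) <;> fun_prop

variable [CompactSpace X]

theorem IsState.apply_mem_Icc {L : C(X, ℝ) → ℝ} (hL : IsState L) (f : C(X, ℝ)) :
    L f ∈ Icc (-‖f‖) ‖f‖ := by
  have hconst : ∀ a : ℝ, L (a • 1) = a := fun a => by rw [hL.map_smul, hL.map_one, mul_one]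
  have hle : ∀ x, |f x| ≤ ‖f‖ := f.norm_coe_le_norm
  have hlower : L ((-‖f‖) • 1) ≤ L f :=
    hL.monotone (ContinuousMap.le_def.2 fun x => by simpa using neg_le_of_abs_le (hle x))
  have hupper : L f ≤ L (‖f‖ • 1) :=
    hL.monotone (ContinuousMap.le_def.2 fun x => by simpa using le_of_abs_le (hle x))
  rw [hconst] at hlower hupper
  exact ⟨hlower, hupper⟩

theorem isCompact_setOf_isState : IsCompact {L : C(X, ℝ) → ℝ | IsState L} :=
  (isCompact_univ_pi fun _ => isCompact_Icc).of_isClosed_subset isClosed_setOf_isState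
    fun _ hL f _ => hL.apply_mem_Icc f

variable [MeasurableSpace X]

theorem isState_integral [OpensMeasurableSpace X] (P : Measure X) [IsProbabilityMeasure P] :
    IsState fun f : C(X, ℝ) => ∫ x, f x ∂P := by
  have hint : ∀ f : C(X, ℝ), Integrable f P := fun f =>
    f.continuous.integrable_of_hasCompactSupport (HasCompactSupport.of_compactSpace f)
  exact
    { map_add := fun f g => integral_add (hint f) (hint g)
      map_smul := fun a f => integral_const_mul a f
      monotone := fun f g hfg => integral_mono (hint f) (hint g) hfg
      map_one := by simp }

variable [T2Space X] [BorelSpace X]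

theorem IsState.exists_integral_eq {L : C(X, ℝ) → ℝ} (hL : IsState L) :
    ∃ P : Measure X, IsProbabilityMeasure P ∧ ∀ f : C(X, ℝ), ∫ x, f x ∂P = L f := by
  let Λ : C_c(X, ℝ) →ₚ[ℝ] ℝ :=
    { toFun := fun g => L g
      map_add' := fun g g' => hL.map_add g g'
      map_smul' := fun a g => hL.map_smul a g
      monotone' := fun g g' hgg' => hL.monotone hgg' }
  have hΛ : ∀ f : C(X, ℝ), ∫ x, f x ∂(RealRMK.rieszMeasure Λ) = L f := fun f =>
    RealRMK.integral_rieszMeasure Λ (CompactlySupportedContinuousMap.continuousMapEquiv f)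
  refine ⟨RealRMK.rieszMeasure Λ, isProbabilityMeasure_iff_real.2 ?_, hΛ⟩
  simpa [hL.map_one] using hΛ 1

def momentConstrained {ι : Type*} (g h : ι → C(X, ℝ)) : Set (Measure X) :=
  {P | IsProbabilityMeasure P ∧ ∀ i, ∫ x, g i x ∂P = ∫ x, h i x ∂P}

theorem exists_isMinOn_integral_momentConstrained {ι : Type*} (c : C(X, ℝ)) (g h : ι → C(X, ℝ))
    (hne : (momentConstrained g h).Nonempty) :
    ∃ P ∈ momentConstrained g h, IsMinOn (fun Q => ∫ x, c x ∂Q) (momentConstrained g h) P := by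
  set K := {L : C(X, ℝ) → ℝ | IsState L} ∩ ⋂ i, {L | L (g i) = L (h i)}
  have hK : IsCompact K := isCompact_setOf_isState.inter_right <|
    isClosed_iInter fun _ => isClosed_eq (continuous_apply _) (continuous_apply _)
  have hmemK : ∀ Q ∈ momentConstrained g h, (fun f : C(X, ℝ) => ∫ x, f x ∂Q) ∈ K :=
    fun Q ⟨_, hQ⟩ => ⟨isState_integral Q, mem_iInter.2 hQ⟩
  obtain ⟨Q₀, hQ₀⟩ := hne
  obtain ⟨L, ⟨hL, hLgh⟩, hLmin⟩ :=
    hK.exists_isMinOn ⟨_, hmemK Q₀ hQ₀⟩ (continuous_apply c).continuousOn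
  obtain ⟨P, hP, hPL⟩ := hL.exists_integral_eq
  refine ⟨P, ⟨hP, fun i => by rw [hPL, hPL]; exact mem_iInter.1 hLgh i⟩, fun Q hQ => ?_⟩
  simpa only [mem_ofPred_eq, hPL] using hLmin (hmemK Q hQ)

end State

section Coupling

variable {M : Type*} [MeasurableSpace M]

theorem isCoupling_map_diag (ν : Measure M) : IsCoupling (ν.map Function.diag) ν ν := by
  constructor <;>
  · rw [Measure.map_map (by fun_prop) measurable_diag]
    exact Measure.map_id

theorem le_transportCost {c : M → M → ℝ} {μ ν : Measure M} {r : ℝ}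
    (hne : ∃ P, IsProbabilityMeasure P ∧ IsCoupling P μ ν)
    (hr : ∀ P, IsProbabilityMeasure P → IsCoupling P μ ν → r ≤ ∫ p, c p.1 p.2 ∂P) :
    r ≤ transportCost c μ ν := by
  obtain ⟨P, hP, hPμν⟩ := hne
  exact le_csInf ⟨_, P, hP, hPμν, rfl⟩ fun _ ⟨Q, hQ, hQμν, hrQ⟩ => hrQ ▸ hr Q hQ hQμν

theorem transportCost_le_integral [TopologicalSpace M] [CompactSpace M]
    [OpensMeasurableSpace (M × M)] {c : M → M → ℝ} (hc : Continuous fun p : M × M => c p.1 p.2)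
    {μ ν : Measure M} (P : Measure (M × M)) [IsProbabilityMeasure P] (hP : IsCoupling P μ ν) :
    transportCost c μ ν ≤ ∫ p, c p.1 p.2 ∂P :=
  csInf_le ⟨-‖(⟨_, hc⟩ : C(M × M, ℝ))‖, fun _ ⟨Q, _, _, hrQ⟩ =>
    hrQ ▸ ((isState_integral Q).apply_mem_Icc ⟨_, hc⟩).1⟩ ⟨P, inferInstance, hP, rfl⟩

theorem map_fst_eq_map_snd_iff [TopologicalSpace M] [HasOuterApproxClosed M] [BorelSpace M]
    (P : Measure (M × M)) [IsFiniteMeasure P] :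
    P.map Prod.fst = P.map Prod.snd ↔ ∀ f : M →ᵇ ℝ, ∫ p, f p.1 ∂P = ∫ p, f p.2 ∂P := by
  have hfst : ∀ f : M →ᵇ ℝ, ∫ x, f x ∂(P.map Prod.fst) = ∫ p, f p.1 ∂P := fun f =>
    integral_map measurable_fst.aemeasurable f.continuous.aestronglyMeasurable
  have hsnd : ∀ f : M →ᵇ ℝ, ∫ x, f x ∂(P.map Prod.snd) = ∫ p, f p.2 ∂P := fun f =>
    integral_map measurable_snd.aemeasurable f.continuous.aestronglyMeasurable
  refine ⟨fun h f => by rw [← hfst, ← hsnd, h], fun h => ?_⟩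
  exact ext_of_forall_integral_eq_of_IsFiniteMeasure fun f => by rw [hfst, hsnd, h]

end Coupling

/-- **Existence of a minimizing measure** (Lemma `costcovex`): on a compact metric space
`M` with continuous cost `c : M × M → ℝ`, there is a Borel probability measure `μ`
achieving `inf_ν C(ν,ν)` over all Borel probability measures `ν` on `M`. -/
theorem exists_minimizing_measure
    (M : Type*) [MetricSpace M] [CompactSpace M] [Nonempty M]
    [MeasurableSpace M] [BorelSpace M]
    (c : M → M → ℝ) (hc : Continuous fun p : M × M => c p.1 p.2) :
    ∃ μ : Measure M, IsProbabilityMeasure μ ∧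
      ∀ ν : Measure M, IsProbabilityMeasure ν →
        transportCost c μ μ ≤ transportCost c ν ν := by
  let g : (M →ᵇ ℝ) → C(M × M, ℝ) := fun f => f.toContinuousMap.comp ContinuousMap.fst
  let h : (M →ᵇ ℝ) → C(M × M, ℝ) := fun f => f.toContinuousMap.comp ContinuousMap.snd
  have hsymm : ∀ Q : Measure (M × M), Q ∈ momentConstrained g h ↔
      IsProbabilityMeasure Q ∧ Q.map Prod.fst = Q.map Prod.snd :=
    fun Q => and_congr_right fun _ => (map_fst_eq_map_snd_iff Q).symm
  have hdiag : ∀ ν : Measure M, IsProbabilityMeasure ν →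
      IsProbabilityMeasure (ν.map Function.diag) ∧ IsCoupling (ν.map Function.diag) ν ν :=
    fun ν _ => ⟨Measure.isProbabilityMeasure_map measurable_diag.aemeasurable, isCoupling_map_diag ν⟩
  have hcoupling : ∀ (ν : Measure M) (Q : Measure (M × M)), IsProbabilityMeasure Q →
      IsCoupling Q ν ν → Q ∈ momentConstrained g h :=
    fun _ Q hQ hQν => (hsymm Q).2 ⟨hQ, hQν.1.trans hQν.2.symm⟩
  obtain ⟨x₀⟩ := ‹Nonempty M›
  obtain ⟨P, hPS, hPmin⟩ := exists_isMinOn_integral_momentConstrained ⟨_, hc⟩ g h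
    ⟨_, (hdiag (Measure.dirac x₀) inferInstance).elim (hcoupling _ _)⟩
  obtain ⟨hP, hPsymm⟩ := (hsymm P).1 hPS
  refine ⟨P.map Prod.fst, Measure.isProbabilityMeasure_map measurable_fst.aemeasurable,
    fun ν hν => ?_⟩
  calc transportCost c (P.map Prod.fst) (P.map Prod.fst)
      ≤ ∫ p, c p.1 p.2 ∂P := transportCost_le_integral hc P ⟨rfl, hPsymm.symm⟩
    _ ≤ transportCost c ν ν :=
        le_transportCost ⟨_, hdiag ν hν⟩ fun Q hQ hQν => hPmin (hcoupling ν Q hQ hQν)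
end

section
/- Let h ∈ ℝ, let g : M → ℝ be continuous with S_t g = g + h t (as functions on M) for all t > 0, and fix T > 0. If Π is a Borel probability measure on M × M whose two marginals coincide and which satisfies ∫_{M×M} c_T(x,y) dΠ(x,y) = h T, then the support of Π is contained in the set {(x,y) ∈ M × M : c_T(x,y) = g(y) − g(x) + h T}. -/
open MeasureTheory

/-- **Support of generalized Mather measures** (Corollary in Section 5): on a compact
metric space `M` with continuous cost `c` satisfying the dynamic programming identity,
let `g` be continuous with `S_t g = g + h t` for all `t > 0` (where
`S_t g (y) = inf_x (c_t(x,y) + g(x))`). If `Π` is a Borel probability measure on `M × M`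
whose two marginals coincide and `∫ c_T dΠ = h T`, then the support of `Π` is contained
in `{(x,y) : c_T(x,y) = g(y) − g(x) + h T}`; here a point `p` is in the support of `Π`
iff every open set containing `p` has positive `Π`-measure. -/
theorem mather_measure_support
    (M : Type*) [MetricSpace M] [CompactSpace M] [Nonempty M]
    [MeasurableSpace M] [BorelSpace M]
    (c : ℝ → M → M → ℝ)
    (hc : ContinuousOn (fun p : ℝ × M × M => c p.1 p.2.1 p.2.2) {p | 0 < p.1})
    (hdpp : ∀ s t : ℝ, 0 < s → 0 < t → ∀ x y : M,
      c (s + t) x y = ⨅ z : M, (c s x z + c t z y))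
    (h : ℝ) (g : M → ℝ) (hg : Continuous g)
    (hfix : ∀ t : ℝ, 0 < t → ∀ y : M, (⨅ x : M, (c t x y + g x)) = g y + h * t)
    (T : ℝ) (hT : 0 < T)
    (P : Measure (M × M)) (hP : IsProbabilityMeasure P)
    (hmarg : P.map Prod.fst = P.map Prod.snd)
    (hcost : ∫ p, c T p.1 p.2 ∂P = h * T) :
    ∀ p : M × M, (∀ U : Set (M × M), IsOpen U → p ∈ U → 0 < P U) →
      c T p.1 p.2 = g p.2 - g p.1 + h * T := by
  have hcT : Continuous (fun q : M × M => c T q.1 q.2) := by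
    rw [continuous_iff_continuousAt]
    intro q
    have hopen : IsOpen {p : ℝ × M × M | 0 < p.1} :=
      isOpen_lt continuous_const continuous_fst
    have h1 : ContinuousAt (fun p : ℝ × M × M => c p.1 p.2.1 p.2.2) (T, q) :=
      hc.continuousAt (hopen.mem_nhds hT)
    exact h1.comp (Continuous.continuousAt (by fun_prop))
  set F : M × M → ℝ := fun q => c T q.1 q.2 - (g q.2 - g q.1 + h * T) with hF
  have hFc : Continuous F := by fun_prop
  have hFnn : ∀ q, 0 ≤ F q := by
    intro q
    have hb : BddBelow (Set.range fun x : M => c T x q.2 + g x) := by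
      have hco : Continuous fun x : M => c T x q.2 + g x := by
        have : Continuous fun x : M => c T x q.2 :=
          hcT.comp (continuous_id.prodMk continuous_const)
        fun_prop
      exact (isCompact_range hco).bddBelow
    have := ciInf_le hb q.1
    rw [hfix T hT q.2] at this
    simp only [hF]
    linarith
  -- integrability of all pieces
  have hFi : Integrable F P :=
    hFc.integrable_of_hasCompactSupport (HasCompactSupport.of_compactSpace F)
  have hg1 : Integrable (fun q : M × M => g q.1) P :=
    (hg.comp continuous_fst).integrable_of_hasCompactSupport
      (HasCompactSupport.of_compactSpace _)
  have hg2 : Integrable (fun q : M × M => g q.2) P :=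
    (hg.comp continuous_snd).integrable_of_hasCompactSupport
      (HasCompactSupport.of_compactSpace _)
  -- ∫ g∘fst = ∫ g∘snd
  have hgeq : ∫ q : M × M, g q.1 ∂P = ∫ q : M × M, g q.2 ∂P := by
    have e1 : ∫ q : M × M, g q.1 ∂P = ∫ x, g x ∂(P.map Prod.fst) :=
      (integral_map measurable_fst.aemeasurable hg.aestronglyMeasurable).symm
    have e2 : ∫ q : M × M, g q.2 ∂P = ∫ x, g x ∂(P.map Prod.snd) :=
      (integral_map measurable_snd.aemeasurable hg.aestronglyMeasurable).symm
    rw [e1, e2, hmarg]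
  -- ∫ F = 0
  have hFint : ∫ q, F q ∂P = 0 := by
    have hcint : Integrable (fun q : M × M => c T q.1 q.2) P :=
      hcT.integrable_of_hasCompactSupport (HasCompactSupport.of_compactSpace _)
    have : ∫ q, F q ∂P
        = (∫ q : M × M, c T q.1 q.2 ∂P) - ((∫ q : M × M, g q.2 ∂P)
            - (∫ q : M × M, g q.1 ∂P) + h * T) := by
      rw [hF]
      rw [integral_sub hcint (by exact ((hg2.sub hg1).add (integrable_const _)))]
      rw [integral_add (f := fun a : M × M => g a.2 - g a.1) (hg2.sub hg1)
        (integrable_const _), integral_sub hg2 hg1]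
      simp [measure_univ]
    rw [this, hcost, hgeq]
    ring
  -- F = 0 a.e.
  have hae : ∀ᵐ q ∂P, F q = 0 := by
    have := (integral_eq_zero_iff_of_nonneg hFnn hFi).mp hFint
    filter_upwards [this] with q hq
    exact hq
  intro p hp
  by_contra hne
  have hFp : 0 < F p := lt_of_le_of_ne (hFnn p) (by simp [hF]; intro hx; exact hne (by linarith)) |>.trans_le le_rfl
  -- open set where F > F p / 2
  have hU : IsOpen {q : M × M | 0 < F q} := isOpen_lt continuous_const hFc
  have hpos := hp _ hU hFp
  have hzero : P {q : M × M | 0 < F q} = 0 := by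
    refine measure_mono_null (fun q hq => ?_) hae
    simp only [Set.mem_setOf_eq] at hq ⊢
    exact ne_of_gt hq
  rw [hzero] at hpos
  exact lt_irrefl 0 hpos
end
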